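/- arXiv:2301.04433 — 13 statements merged into one kernel-verified Lean document; each statement's English description precedes it below -/
import Mathlib

section
/- Let $X$ be a Banach space and $x \in S_X$. If there exists a finite-rank bounded linear operator $T$ on $X$ such that $\|x - Tx\| + \|\mathrm{Id} - T\| < 2$, then $x$ is not a super $\Delta$-point. -/
open Metric Set Pointwise Filter Topology

variable {X : Type*} [NormedAddCommGroup X] [NormedSpace ℝ X]

def sliceSet (f : X →L[ℝ] ℝ) (δ : ℝ) : Set X :=
  {y ∈ closedBall (0 : X) 1 | 1 - δ < f y}

def IsSlice (S : Set X) : Prop :=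
  ∃ (f : X →L[ℝ] ℝ) (δ : ℝ), ‖f‖ = 1 ∧ 0 < δ ∧ S = sliceSet f δ

def IsCCS (C : Set X) : Prop :=
  ∃ (n : ℕ) (l : Fin n → ℝ) (S : Fin n → Set X),
    (∀ i, 0 < l i) ∧ (∑ i, l i) = 1 ∧ (∀ i, IsSlice (S i)) ∧
    C = ∑ i, l i • S i

def RelWeakOpen (V : Set X) : Prop :=
  ∃ U : Set X, IsOpen (show Set (WeakSpace ℝ X) from U) ∧ V = U ∩ closedBall 0 1

def weakClosure (A : Set X) : Set X :=
  @closure (WeakSpace ℝ X) _ A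

def SuperDeltaPoint (x : X) : Prop :=
  ∀ V : Set X, RelWeakOpen V → x ∈ V → ∀ ε > 0, ∃ y ∈ V, 2 - ε < ‖x - y‖

def SuperDaugavetPoint (x : X) : Prop :=
  ∀ V : Set X, RelWeakOpen V → V.Nonempty → ∀ ε > 0, ∃ y ∈ V, 2 - ε < ‖x - y‖

def CcsDeltaPoint (x : X) : Prop :=
  ∀ C : Set X, IsCCS C → x ∈ C → ∀ ε > 0, ∃ y ∈ C, 2 - ε < ‖x - y‖

def CcsDaugavetPoint (x : X) : Prop :=
  ∀ C : Set X, IsCCS C → ∀ ε > 0, ∃ y ∈ C, 2 - ε < ‖x - y‖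

/-! Because `T` has finite rank, `y ↦ T y` is continuous from the weak topology to the norm
topology, so `{y ∈ B_X | ‖T y - T x‖ < r}` is a relatively weakly open neighbourhood of `x`.
On it `‖x - y‖ ≤ ‖x - T x‖ + r + ‖Id - T‖`, which stays below `2` once `r` is small. -/

theorem continuous_toWeakSpace_symm_of_finiteDimensional {𝕜 E : Type*}
    [NontriviallyNormedField 𝕜] [CompleteSpace 𝕜] [AddCommGroup E] [Module 𝕜 E]
    [TopologicalSpace E] [IsTopologicalAddGroup E] [ContinuousSMul 𝕜 E] [SeparatingDual 𝕜 E]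
    [FiniteDimensional 𝕜 E] : Continuous (toWeakSpace 𝕜 E).symm :=
  have : FiniteDimensional 𝕜 (WeakSpace 𝕜 E) := ‹FiniteDimensional 𝕜 E›
  LinearMap.continuous_of_finiteDimensional (toWeakSpace 𝕜 E).symm.toLinearMap

theorem ContinuousLinearMap.continuous_weakSpace_of_finiteDimensional_range {𝕜 E F : Type*}
    [RCLike 𝕜] [NormedAddCommGroup E] [NormedSpace 𝕜 E] [NormedAddCommGroup F]
    [NormedSpace 𝕜 F] (T : E →L[𝕜] F) [FiniteDimensional 𝕜 (LinearMap.range T.toLinearMap)] :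
    Continuous fun y : WeakSpace 𝕜 E => T ((toWeakSpace 𝕜 E).symm y) := by
  let S : E →L[𝕜] LinearMap.range T.toLinearMap :=
    T.codRestrict _ (LinearMap.mem_range_self T.toLinearMap)
  exact continuous_subtype_val.comp
    (continuous_toWeakSpace_symm_of_finiteDimensional.comp (WeakSpace.map S).continuous)

theorem ContinuousLinearMap.norm_sub_le_of_norm_le_one {𝕜 E : Type*}
    [NontriviallyNormedField 𝕜] [SeminormedAddCommGroup E] [NormedSpace 𝕜 E] (T : E →L[𝕜] E)
    (x : E) {y : E} (hy : ‖y‖ ≤ 1) :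
    ‖x - y‖ ≤ ‖x - T x‖ + ‖T x - T y‖ + ‖ContinuousLinearMap.id 𝕜 E - T‖ := by
  have hTy : ‖y - T y‖ ≤ ‖ContinuousLinearMap.id 𝕜 E - T‖ :=
    (ContinuousLinearMap.id 𝕜 E - T).le_of_opNorm_le_of_le le_rfl hy |>.trans_eq (mul_one _)
  calc ‖x - y‖ = ‖(x - T x) + (T x - T y) - (y - T y)‖ := by congr 1; abel
    _ ≤ ‖x - T x‖ + ‖T x - T y‖ + ‖y - T y‖ :=
      (norm_sub_le _ _).trans (by gcongr; exact norm_add_le _ _)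
    _ ≤ _ := by gcongr

theorem not_superDelta_of_finiteRank_general {X : Type*} [NormedAddCommGroup X]
    [NormedSpace ℝ X] (x : X) (hx : ‖x‖ = 1)
    (T : X →L[ℝ] X) (hT : FiniteDimensional ℝ (LinearMap.range T.toLinearMap))
    (h : ‖x - T x‖ + ‖ContinuousLinearMap.id ℝ X - T‖ < 2) :
    ¬ SuperDeltaPoint x := by
  intro hx_delta
  set r := (2 - (‖x - T x‖ + ‖ContinuousLinearMap.id ℝ X - T‖)) / 2
    with hr_def
  have hr : 0 < r := by linarith
  let U : Set X := {y | ‖T y - T x‖ < r}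
  have hU : IsOpen (show Set (WeakSpace ℝ X) from U) :=
    isOpen_lt (T.continuous_weakSpace_of_finiteDimensional_range.sub continuous_const).norm
      continuous_const
  obtain ⟨y, ⟨hyU, hy⟩, hxy⟩ := hx_delta (U ∩ closedBall 0 1) ⟨U, hU, rfl⟩
    ⟨by simpa [U] using hr, by simp [hx]⟩ r hr
  have hxy_le := T.norm_sub_le_of_norm_le_one x (mem_closedBall_zero_iff.mp hy)
  rw [norm_sub_rev (T x)] at hxy_le
  linarith [show ‖T y - T x‖ < r from hyU]

theorem not_superDelta_of_finiteRank {X : Type*} [NormedAddCommGroup X]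
    [NormedSpace ℝ X] [CompleteSpace X] (x : X) (hx : ‖x‖ = 1)
    (T : X →L[ℝ] X) (hT : FiniteDimensional ℝ (LinearMap.range T.toLinearMap))
    (h : ‖x - T x‖ + ‖ContinuousLinearMap.id ℝ X - T‖ < 2) :
    ¬ SuperDeltaPoint x :=
  not_superDelta_of_finiteRank_general x hx T hT h
end

section
/- Let $X$ be a Banach space such that there exists a set $\mathcal{A}$ of finite-rank bounded operators on $X$ with $\sup\{\|\mathrm{Id}-T\| : T \in \mathcal{A}\} < 2$ and such that for every $\varepsilon > 0$ and every $x \in X$ there exists $T \in \mathcal{A}$ with $\|x - Tx\| < \varepsilon$. Then $X$ contains no super $\Delta$-point. -/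
open Metric Set Pointwise Filter Topology

variable {X : Type*} [NormedAddCommGroup X] [NormedSpace ℝ X]

lemma finiteRank_weak_continuous {X : Type*} [NormedAddCommGroup X] [NormedSpace ℝ X]
    [CompleteSpace X] (T : X →L[ℝ] X)
    (h : FiniteDimensional ℝ (LinearMap.range T.toLinearMap)) :
    Continuous fun y : WeakSpace ℝ X => T y := by
  set R := LinearMap.range T.toLinearMap with hR
  haveI : FiniteDimensional ℝ R := h
  let T' : X →L[ℝ] R := T.codRestrict R (fun x => LinearMap.mem_range_self _ x)
  let b := Module.finBasis ℝ R
  let g : Fin (Module.finrank ℝ R) → (X →L[ℝ] ℝ) :=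
    fun i => (LinearMap.toContinuousLinearMap (b.coord i)).comp T'
  have hT : ∀ y : X, T y = ∑ i, g i y • (b i : X) := by
    intro y
    have h1 : (T' y : X) = T y := rfl
    rw [← h1, ← b.sum_repr (T' y)]
    push_cast
    rfl
  have : Continuous fun y : WeakSpace ℝ X => ∑ i, g i y • (b i : X) := by
    apply continuous_finset_sum
    intro i _
    exact (WeakBilin.eval_continuous _ (g i)).smul continuous_const
  exact this.congr fun y => (hT y).symm

theorem no_superDelta_of_family {X : Type*} [NormedAddCommGroup X]
    [NormedSpace ℝ X] [CompleteSpace X] (𝒜 : Set (X →L[ℝ] X))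
    (hfr : ∀ T ∈ 𝒜, FiniteDimensional ℝ (LinearMap.range T.toLinearMap))
    (M : ℝ) (hM : M < 2)
    (hbd : ∀ T ∈ 𝒜, ‖ContinuousLinearMap.id ℝ X - T‖ ≤ M)
    (happrox : ∀ ε > 0, ∀ x : X, ∃ T ∈ 𝒜, ‖x - T x‖ < ε) :
    ∀ x : X, ‖x‖ = 1 → ¬ SuperDeltaPoint x := by
  intro x hx hsd
  set ε := (2 - M) / 4 with hεdef
  have hε0 : 0 < ε := by rw [hεdef]; linarith
  obtain ⟨T, hT𝒜, hTx⟩ := happrox ε hε0 x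
  have hMnn : 0 ≤ M := le_trans (norm_nonneg _) (hbd T hT𝒜)
  have hcont := finiteRank_weak_continuous T (hfr T hT𝒜)
  set U : Set X := {y : X | T y ∈ Metric.ball (T x) ε} with hUdef
  have hUopen : IsOpen (show Set (WeakSpace ℝ X) from U) :=
    Metric.isOpen_ball.preimage hcont
  have hV : RelWeakOpen (U ∩ closedBall (0 : X) 1) := ⟨U, hUopen, rfl⟩
  have hxV : x ∈ U ∩ closedBall (0 : X) 1 :=
    ⟨Metric.mem_ball_self hε0, by simp [mem_closedBall_zero_iff, hx]⟩
  obtain ⟨y, ⟨hyU, hy1⟩, hxy⟩ := hsd _ hV hxV ε hε0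
  have hTyTx : ‖T x - T y‖ < ε := by
    have := hyU
    rw [hUdef, mem_setOf_eq, Metric.mem_ball, dist_eq_norm] at this
    rw [← norm_neg]; simpa [neg_sub] using this
  have hy1' : ‖y‖ ≤ 1 := mem_closedBall_zero_iff.mp hy1
  have hTy : ‖T y - y‖ ≤ M := by
    have h1 : ‖(ContinuousLinearMap.id ℝ X - T) y‖ ≤ ‖ContinuousLinearMap.id ℝ X - T‖ * ‖y‖ :=
      ContinuousLinearMap.le_opNorm _ y
    have h2 : (ContinuousLinearMap.id ℝ X - T) y = y - T y := by simp
    rw [h2] at h1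
    calc ‖T y - y‖ = ‖y - T y‖ := by rw [← norm_neg]; simp
    _ ≤ ‖ContinuousLinearMap.id ℝ X - T‖ * ‖y‖ := h1
    _ ≤ M * 1 := mul_le_mul (hbd T hT𝒜) hy1' (norm_nonneg _) hMnn
    _ = M := mul_one M
  have htri : ‖x - y‖ ≤ ‖x - T x‖ + ‖T x - T y‖ + ‖T y - y‖ := by
    have : x - y = (x - T x) + (T x - T y) + (T y - y) := by abel
    rw [this]; exact norm_add₃_le
  have : 2 - ε < ε + ε + M := lt_of_lt_of_le hxy (htri.trans (by linarith))
  rw [hεdef] at this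
  linarith
end

section
/- Let $X$ and $Y$ be Banach spaces and $N$ an absolute normalized norm on $\mathbb{R}^2$. If $x \in S_X$ and $y \in S_Y$ are super $\Delta$-points, then $(ax, by)$ is a super $\Delta$-point in $X \oplus_N Y$ for every $(a,b) \in \mathbb{R}^2$ with $N(a,b) = 1$. -/
/-!
Pick `x'` and `y'` in the unit balls, weakly close to `x` and `y` (so that `(a • x', b • y')`
stays in the given weakly open set) with `‖x - x'‖, ‖y - y'‖ > 2 - δ`. An absolute norm is
convex and even in each coordinate, hence monotone in each coordinate on the positive quadrant,
so `(a • x', b • y')` lies in the unit ball of `X ⊕_N Y` and its distance to `(a • x, b • y)` is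
at least `(2 - δ) N(a, b) = 2 - δ`.
-/

open Metric Set Pointwise Filter Topology

variable {X : Type*} [NormedAddCommGroup X] [NormedSpace ℝ X]

structure IsAbsoluteSeminorm (N : ℝ → ℝ → ℝ) : Prop where
  abs_eq : ∀ a b : ℝ, N a b = N |a| |b|
  add_le : ∀ a b c d : ℝ, N (a + c) (b + d) ≤ N a b + N c d
  mul_eq : ∀ t a b : ℝ, N (t * a) (t * b) = |t| * N a b

namespace IsAbsoluteSeminorm

variable {N : ℝ → ℝ → ℝ}

lemma swap (hN : IsAbsoluteSeminorm N) : IsAbsoluteSeminorm (fun a b ↦ N b a) where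
  abs_eq a b := hN.abs_eq b a
  add_le a b c d := hN.add_le b a d c
  mul_eq t a b := hN.mul_eq t b a

lemma convexOn_left (hN : IsAbsoluteSeminorm N) (b : ℝ) : ConvexOn ℝ univ (fun a ↦ N a b) := by
  refine ⟨convex_univ, fun a₁ _ a₂ _ s t hs ht hst ↦ ?_⟩
  calc N (s • a₁ + t • a₂) b = N (s * a₁ + t * a₂) (s * b + t * b) := by
        rw [← add_mul, hst, one_mul, smul_eq_mul, smul_eq_mul]
    _ ≤ N (s * a₁) (s * b) + N (t * a₂) (t * b) := hN.add_le _ _ _ _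
    _ = s • N a₁ b + t • N a₂ b := by
        rw [hN.mul_eq, hN.mul_eq, abs_of_nonneg hs, abs_of_nonneg ht, smul_eq_mul, smul_eq_mul]

lemma monotoneOn_left (hN : IsAbsoluteSeminorm N) (b : ℝ) :
    MonotoneOn (fun a ↦ N a b) (Ici 0) := by
  intro a' ha' a _ haa'
  have hneg : N (-a) b = N a b := by rw [hN.abs_eq, abs_neg, ← hN.abs_eq]
  have h := (hN.convexOn_left b).le_max_of_mem_Icc (mem_univ (-a)) (mem_univ a)
    ⟨by linarith [mem_Ici.mp ha'], haa'⟩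
  rwa [hneg, max_self] at h

lemma mono (hN : IsAbsoluteSeminorm N) {a a' b b' : ℝ} (ha' : 0 ≤ a') (haa' : a' ≤ a)
    (hb' : 0 ≤ b') (hbb' : b' ≤ b) : N a' b' ≤ N a b :=
  calc N a' b' ≤ N a' b := hN.swap.monotoneOn_left a' hb' (hb'.trans hbb') hbb'
    _ ≤ N a b := hN.monotoneOn_left b ha' (ha'.trans haa') haa'

variable {Y : Type*} [NormedAddCommGroup Y] [NormedSpace ℝ Y]

lemma norm_smul_le (hN : IsAbsoluteSeminorm N) (a b : ℝ) {u : X} {v : Y}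
    (hu : ‖u‖ ≤ 1) (hv : ‖v‖ ≤ 1) : N ‖a • u‖ ‖b • v‖ ≤ N a b := by
  rw [hN.abs_eq a b, norm_smul, norm_smul, Real.norm_eq_abs, Real.norm_eq_abs]
  exact hN.mono (by positivity) (mul_le_of_le_one_right (abs_nonneg a) hu)
    (by positivity) (mul_le_of_le_one_right (abs_nonneg b) hv)

lemma mul_le_norm_smul (hN : IsAbsoluteSeminorm N) (a b : ℝ) {r : ℝ} (hr : 0 ≤ r) {u : X} {v : Y}
    (hu : r ≤ ‖u‖) (hv : r ≤ ‖v‖) : r * N a b ≤ N ‖a • u‖ ‖b • v‖ := by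
  have hr_mul := hN.mul_eq r |a| |b|
  rw [abs_of_nonneg hr] at hr_mul
  rw [hN.abs_eq a b, ← hr_mul, norm_smul, norm_smul, Real.norm_eq_abs, Real.norm_eq_abs]
  exact hN.mono (by positivity) (by rw [mul_comm]; gcongr)
    (by positivity) (by rw [mul_comm]; gcongr)

end IsAbsoluteSeminorm

lemma SuperDeltaPoint.exists_smul_mem_of_lt_norm_sub {x : X} (hx : SuperDeltaPoint x)
    (hx₁ : ‖x‖ ≤ 1) {a : ℝ} {U : Set X} (hU : IsOpen (show Set (WeakSpace ℝ X) from U))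
    (haxU : a • x ∈ U) {δ : ℝ} (hδ : 0 < δ) :
    ∃ x', ‖x'‖ ≤ 1 ∧ a • x' ∈ U ∧ 2 - δ < ‖x - x'‖ := by
  have hV : RelWeakOpen ({x' : X | a • x' ∈ U} ∩ closedBall 0 1) :=
    ⟨_, hU.preimage (continuous_const_smul (T := WeakSpace ℝ X) a), rfl⟩
  obtain ⟨x', ⟨hx'U, hx'₁⟩, hfar⟩ := hx _ hV ⟨haxU, mem_closedBall_zero_iff.mpr hx₁⟩ δ hδ
  exact ⟨x', mem_closedBall_zero_iff.mp hx'₁, hx'U, hfar⟩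

theorem superDelta_absolute_sum_general {X Y : Type*} [NormedAddCommGroup X] [NormedSpace ℝ X]
    [NormedAddCommGroup Y] [NormedSpace ℝ Y]
    (N : ℝ → ℝ → ℝ)
    (habs : ∀ a b : ℝ, N a b = N |a| |b|)
    (htri : ∀ a b c d : ℝ, N (a + c) (b + d) ≤ N a b + N c d)
    (hhom : ∀ t a b : ℝ, N (t * a) (t * b) = |t| * N a b)
    (x : X) (y : Y) (hx : ‖x‖ = 1) (hy : ‖y‖ = 1)
    (hxD : SuperDeltaPoint x) (hyD : SuperDeltaPoint y)
    (a b : ℝ) (hab : N a b = 1) :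
    ∀ V : Set (X × Y),
      (∃ U : Set (X × Y),
        IsOpen (show Set (WeakSpace ℝ X × WeakSpace ℝ Y) from U) ∧
        V = U ∩ {p : X × Y | N ‖p.1‖ ‖p.2‖ ≤ 1}) →
      (a • x, b • y) ∈ V →
      ∀ ε > 0, ∃ q ∈ V, 2 - ε < N ‖a • x - q.1‖ ‖b • y - q.2‖ := by
  rintro V ⟨U, hU, rfl⟩ ⟨hU_mem, -⟩ ε hε
  have hN : IsAbsoluteSeminorm N := ⟨habs, htri, hhom⟩
  obtain ⟨δ, hδ, hδε, hδ₂⟩ : ∃ δ, 0 < δ ∧ δ < ε ∧ δ ≤ 2 :=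
    ⟨min (ε / 2) 1, by positivity, (min_le_left _ _).trans_lt (by linarith),
      (min_le_right _ _).trans one_le_two⟩
  obtain ⟨U₁, U₂, hU₁, hU₂, hxU₁, hyU₂, hU₁₂⟩ := isOpen_prod_iff.mp hU _ _ hU_mem
  obtain ⟨x', hx'₁, hx'U, hxx'⟩ := hxD.exists_smul_mem_of_lt_norm_sub hx.le hU₁ hxU₁ hδ
  obtain ⟨y', hy'₁, hy'U, hyy'⟩ := hyD.exists_smul_mem_of_lt_norm_sub hy.le hU₂ hyU₂ hδ
  refine ⟨(a • x', b • y'), ⟨hU₁₂ ⟨hx'U, hy'U⟩, hab ▸ hN.norm_smul_le a b hx'₁ hy'₁⟩, ?_⟩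
  calc 2 - ε < (2 - δ) * N a b := by rw [hab]; linarith
    _ ≤ N ‖a • (x - x')‖ ‖b • (y - y')‖ :=
        hN.mul_le_norm_smul a b (by linarith) hxx'.le hyy'.le
    _ = N ‖a • x - a • x'‖ ‖b • y - b • y'‖ := by rw [smul_sub, smul_sub]

theorem superDelta_absolute_sum {X Y : Type*} [NormedAddCommGroup X] [NormedSpace ℝ X]
    [NormedAddCommGroup Y] [NormedSpace ℝ Y] [CompleteSpace X] [CompleteSpace Y]
    (N : ℝ → ℝ → ℝ)
    (habs : ∀ a b : ℝ, N a b = N |a| |b|)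
    (hnorm₁ : N 1 0 = 1) (hnorm₂ : N 0 1 = 1)
    (htri : ∀ a b c d : ℝ, N (a + c) (b + d) ≤ N a b + N c d)
    (hhom : ∀ t a b : ℝ, N (t * a) (t * b) = |t| * N a b)
    (hdef : ∀ a b : ℝ, N a b = 0 → a = 0 ∧ b = 0)
    (x : X) (y : Y) (hx : ‖x‖ = 1) (hy : ‖y‖ = 1)
    (hxD : SuperDeltaPoint x) (hyD : SuperDeltaPoint y)
    (a b : ℝ) (hab : N a b = 1) :
    ∀ V : Set (X × Y),
      (∃ U : Set (X × Y),
        IsOpen (show Set (WeakSpace ℝ X × WeakSpace ℝ Y) from U) ∧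
        V = U ∩ {p : X × Y | N ‖p.1‖ ‖p.2‖ ≤ 1}) →
      (a • x, b • y) ∈ V →
      ∀ ε > 0, ∃ q ∈ V, 2 - ε < N ‖a • x - q.1‖ ‖b • y - q.2‖ :=
  superDelta_absolute_sum_general N habs htri hhom x y hx hy hxD hyD a b hab
end

section
/- Let $X$ be an arbitrary Banach space and $Y$ a Banach space whose unit ball has a strongly exposed point $y_0 \in S_Y$. Then for every $\varepsilon > 0$ there exists a convex combination of slices of the unit ball of $E := X \oplus_1 Y$ that contains $0$ and has diameter at most $4\varepsilon$. In particular $E$ fails the strong diameter 2 property and contains no ccs Daugavet point. -/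
open Metric Set Pointwise Filter Topology

variable {X : Type*} [NormedAddCommGroup X] [NormedSpace ℝ X]

/-! Let `g` strongly expose `y₀` and put `G := g ∘ snd`, `p₀ := (0, y₀)` on `X ⊕₁ Y`. If
`‖z‖ ≤ 1` and `G z > 1 - δ`, then `z.snd` lies in a small slice of `B_Y`, hence near `y₀`, and
the `ℓ₁`-norm leaves `z.fst` at most `1 - ‖z.snd‖ < δ`; so the slices of `G` shrink to `p₀`
and, by symmetry, those of `-G` shrink to `-p₀`. Half the sum of two such opposite slices
contains `0 = p₀/2 - p₀/2` and lies in a small ball around `0`. -/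

theorem ContinuousLinearMap.apply_le_norm_of_opNorm_le_one {f : X →L[ℝ] ℝ} (hf : ‖f‖ ≤ 1)
    (x : X) : f x ≤ ‖x‖ :=
  (le_abs_self _).trans <| (f.le_of_opNorm_le hf x).trans_eq (one_mul _)

theorem sliceSet_mono (f : X →L[ℝ] ℝ) {δ δ' : ℝ} (h : δ ≤ δ') :
    sliceSet f δ ⊆ sliceSet f δ' :=
  fun _ ⟨hball, hf⟩ => ⟨hball, by linarith⟩

theorem sliceSet_neg (f : X →L[ℝ] ℝ) (δ : ℝ) : sliceSet (-f) δ = -sliceSet f δ := by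
  ext y
  simp [sliceSet]

theorem IsSlice.neg {f : X →L[ℝ] ℝ} {δ : ℝ} (hf : ‖f‖ = 1) (hδ : 0 < δ) :
    IsSlice (sliceSet (-f) δ) :=
  ⟨-f, δ, by rw [norm_neg, hf], hδ, rfl⟩

theorem isCCS_midpoint_add {S T : Set X} (hS : IsSlice S) (hT : IsSlice T) :
    IsCCS ((2⁻¹ : ℝ) • S + (2⁻¹ : ℝ) • T) := by
  refine ⟨2, ![2⁻¹, 2⁻¹], ![S, T], ?_, by norm_num [Fin.sum_univ_two], ?_, ?_⟩
  · intro i; fin_cases i <;> norm_num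
  · intro i; fin_cases i <;> assumption
  · simp [Fin.sum_univ_two]

theorem exists_isCCS_zero_mem_subset_closedBall {f : X →L[ℝ] ℝ} {δ ε : ℝ} {p : X}
    (hf : ‖f‖ = 1) (hδ : 0 < δ) (hp : p ∈ sliceSet f δ) (hS : sliceSet f δ ⊆ closedBall p ε) :
    ∃ C : Set X, IsCCS C ∧ (0 : X) ∈ C ∧ C ⊆ closedBall 0 ε := by
  refine ⟨(2⁻¹ : ℝ) • sliceSet f δ + (2⁻¹ : ℝ) • sliceSet (-f) δ,
    isCCS_midpoint_add ⟨f, δ, hf, hδ, rfl⟩ (IsSlice.neg hf hδ), ?_, ?_⟩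
  · have hp' : -p ∈ sliceSet (-f) δ := by rwa [sliceSet_neg, Set.neg_mem_neg]
    have h0 : (0 : X) = (2⁻¹ : ℝ) • p + (2⁻¹ : ℝ) • -p := by module
    rw [h0]
    exact add_mem_add (smul_mem_smul_set hp) (smul_mem_smul_set hp')
  · rintro _ ⟨_, ⟨u, hu, rfl⟩, _, ⟨v, hv, rfl⟩, rfl⟩
    rw [sliceSet_neg, Set.mem_neg] at hv
    have hu := mem_closedBall.mp (hS hu)
    have hv := mem_closedBall.mp (hS hv)
    have huv : ‖u + v‖ ≤ 2 * ε := by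
      rw [← sub_neg_eq_add, ← dist_eq_norm]
      linarith [dist_triangle_right u (-v) p]
    rw [mem_closedBall_zero_iff]
    change ‖(2⁻¹ : ℝ) • u + (2⁻¹ : ℝ) • v‖ ≤ ε
    rw [← smul_add, norm_smul]
    norm_num
    linarith

theorem not_ccsDaugavetPoint_of_subset_closedBall {C : Set X} {r : ℝ} (hC : IsCCS C)
    (hCr : C ⊆ closedBall 0 r) (hr : r < 1) {z : X} (hz : ‖z‖ = 1) :
    ¬ CcsDaugavetPoint z := by
  intro hz_daug
  obtain ⟨y, hy, hzy⟩ := hz_daug C hC (1 - r) (by linarith)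
  have hy := mem_closedBall_zero_iff.mp (hCr hy)
  linarith [norm_sub_le z y]

section

variable {Y : Type*} [NormedAddCommGroup Y] [NormedSpace ℝ Y]

theorem exists_sliceSet_subset_ball
    {g : Y →L[ℝ] ℝ} (hg : ‖g‖ ≤ 1) {y₀ : Y}
    (hse : ∀ yn : ℕ → Y, (∀ n, yn n ∈ closedBall (0 : Y) 1) →
      Tendsto (fun n => g (yn n)) atTop (𝓝 1) → Tendsto (fun n => ‖yn n - y₀‖) atTop (𝓝 0))
    {ε : ℝ} (hε : 0 < ε) :
    ∃ δ > 0, sliceSet g δ ⊆ ball y₀ ε := by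
  by_contra! h
  choose w hw hw_far using fun n : ℕ =>
    not_subset.mp (h (1 / ((n : ℝ) + 1)) Nat.one_div_pos_of_nat)
  have hg_le : ∀ n, g (w n) ≤ 1 := fun n =>
    (g.apply_le_norm_of_opNorm_le_one hg _).trans (mem_closedBall_zero_iff.mp (hw n).1)
  have hlim : Tendsto (fun n => g (w n)) atTop (𝓝 1) := by
    refine tendsto_of_tendsto_of_tendsto_of_le_of_le ?_ tendsto_const_nhds
      (fun n => (hw n).2.le) hg_le
    simpa using tendsto_const_nhds.sub (tendsto_one_div_add_atTop_nhds_zero_nat (𝕜 := ℝ))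
  obtain ⟨n, hn⟩ := ((hse w (fun n => (hw n).1) hlim).eventually (gt_mem_nhds hε)).exists
  exact hw_far n (mem_ball_iff_norm.mpr hn)

theorem WithLp.norm_comp_sndL (p : ENNReal) [Fact (1 ≤ p)] (g : Y →L[ℝ] ℝ) :
    ‖g.comp (WithLp.sndL p ℝ X Y)‖ = ‖g‖ := by
  refine le_antisymm (ContinuousLinearMap.opNorm_le_bound _ (norm_nonneg g) fun z => ?_)
    (ContinuousLinearMap.opNorm_le_bound _ (norm_nonneg _) fun y => ?_)
  · exact (g.le_opNorm z.snd).trans (by gcongr; exact WithLp.norm_snd_le X z)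
  · simpa using (g.comp (WithLp.sndL p ℝ X Y)).le_opNorm (WithLp.toLp p (0, y))

theorem sliceSet_comp_sndL_subset_closedBall {g : Y →L[ℝ] ℝ} (hg : ‖g‖ ≤ 1) {y₀ : Y}
    {δ ε : ℝ} (hδ : δ ≤ ε) (hsub : sliceSet g δ ⊆ ball y₀ ε) :
    sliceSet (g.comp (WithLp.sndL 1 ℝ X Y)) δ ⊆ closedBall (WithLp.toLp 1 (0, y₀)) (2 * ε) := by
  rintro z ⟨hz, hgz⟩
  rw [mem_closedBall_zero_iff, WithLp.prod_norm_eq_of_L1] at hz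
  simp only [ContinuousLinearMap.coe_comp, Function.comp_apply, WithLp.sndL_apply] at hgz
  have hsnd : ‖z.snd - y₀‖ < ε :=
    mem_ball_iff_norm.mp (hsub ⟨mem_closedBall_zero_iff.mpr (by linarith [norm_nonneg z.fst]), hgz⟩)
  have hg_snd := g.apply_le_norm_of_opNorm_le_one hg z.snd
  rw [mem_closedBall, dist_eq_norm, WithLp.prod_norm_eq_of_L1]
  simp only [WithLp.sub_fst, WithLp.sub_snd, WithLp.toLp_fst, WithLp.toLp_snd, sub_zero]
  linarith

end

theorem ell1_sum_small_ccs_general {X Y : Type*} [NormedAddCommGroup X] [NormedSpace ℝ X]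
    [NormedAddCommGroup Y] [NormedSpace ℝ Y]
    (y₀ : Y) (hy₀ : ‖y₀‖ = 1)
    (g : Y →L[ℝ] ℝ) (hg : ‖g‖ = 1) (hgy₀ : g y₀ = 1)
    (hse : ∀ yn : ℕ → Y, (∀ n, yn n ∈ closedBall (0 : Y) 1) →
      Filter.Tendsto (fun n => g (yn n)) Filter.atTop (nhds 1) →
      Filter.Tendsto (fun n => ‖yn n - y₀‖) Filter.atTop (nhds 0)) :
    (∀ ε > 0, ∃ C : Set (WithLp 1 (X × Y)),
      IsCCS C ∧ (0 : WithLp 1 (X × Y)) ∈ C ∧ Metric.diam C ≤ 4 * ε) ∧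
    (∃ C : Set (WithLp 1 (X × Y)), IsCCS C ∧ Metric.diam C < 2) ∧
    (∀ z : WithLp 1 (X × Y), ‖z‖ = 1 → ¬ CcsDaugavetPoint z) := by
  have small : ∀ ε > 0, ∃ C : Set (WithLp 1 (X × Y)),
      IsCCS C ∧ (0 : WithLp 1 (X × Y)) ∈ C ∧ C ⊆ closedBall 0 ε := by
    intro ε hε
    obtain ⟨δ₀, hδ₀, hsub⟩ := exists_sliceSet_subset_ball hg.le hse (half_pos hε)
    have hp₀ : WithLp.toLp 1 ((0 : X), y₀) ∈ sliceSet (g.comp (WithLp.sndL 1 ℝ X Y))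
        (min δ₀ (ε / 2)) :=
      ⟨by simp [hy₀], by simp [hgy₀, hδ₀, hε]⟩
    refine exists_isCCS_zero_mem_subset_closedBall ((WithLp.norm_comp_sndL 1 g).trans hg)
      (lt_min hδ₀ (half_pos hε)) hp₀ ?_
    have hS := sliceSet_comp_sndL_subset_closedBall (X := X) hg.le (min_le_right _ _)
      ((sliceSet_mono g (min_le_left _ _)).trans hsub)
    rwa [mul_div_cancel₀ ε two_ne_zero] at hS
  refine ⟨fun ε hε => ?_, ?_, fun z hz => ?_⟩
  · obtain ⟨C, hC, h0, hCε⟩ := small ε hε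
    exact ⟨C, hC, h0, (diam_le_of_subset_closedBall hε.le hCε).trans (by linarith)⟩
  · obtain ⟨C, hC, -, hCr⟩ := small (1 / 2) (by norm_num)
    exact ⟨C, hC, (diam_le_of_subset_closedBall (by norm_num) hCr).trans_lt (by norm_num)⟩
  · obtain ⟨C, hC, -, hCr⟩ := small (1 / 2) (by norm_num)
    exact not_ccsDaugavetPoint_of_subset_closedBall hC hCr (by norm_num) hz

theorem ell1_sum_small_ccs {X Y : Type*} [NormedAddCommGroup X] [NormedSpace ℝ X]
    [NormedAddCommGroup Y] [NormedSpace ℝ Y] [CompleteSpace X] [CompleteSpace Y]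
    (y₀ : Y) (hy₀ : ‖y₀‖ = 1)
    (g : Y →L[ℝ] ℝ) (hg : ‖g‖ = 1) (hgy₀ : g y₀ = 1)
    (hse : ∀ yn : ℕ → Y, (∀ n, yn n ∈ closedBall (0 : Y) 1) →
      Filter.Tendsto (fun n => g (yn n)) Filter.atTop (nhds 1) →
      Filter.Tendsto (fun n => ‖yn n - y₀‖) Filter.atTop (nhds 0)) :
    (∀ ε > 0, ∃ C : Set (WithLp 1 (X × Y)),
      IsCCS C ∧ (0 : WithLp 1 (X × Y)) ∈ C ∧ Metric.diam C ≤ 4 * ε) ∧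
    (∃ C : Set (WithLp 1 (X × Y)), IsCCS C ∧ Metric.diam C < 2) ∧
    (∀ z : WithLp 1 (X × Y), ‖z‖ = 1 → ¬ CcsDaugavetPoint z) :=
  ell1_sum_small_ccs_general y₀ hy₀ g hg hgy₀ hse
end

section
/- Let $X$ and $Y$ be Banach spaces and $E := X \oplus_\infty Y$. If $x \in S_X$ is a ccs Daugavet point, then $(x,y) \in S_E$ is a ccs Daugavet point for every $y \in B_Y$. -/
open Metric Set Pointwise Filter Topology

variable {X : Type*} [NormedAddCommGroup X] [NormedSpace ℝ X]

/-! A slice `{f > 1 - δ}` of the unit ball of `X ⊕∞ Y` contains `T × {b}` for a slice `T` of `B_X`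
and some `b ∈ B_Y`: writing `f (u, v) = g u + h v` we have `‖g‖ + ‖h‖ ≥ 1`, so it suffices to take
`T = {g > ‖g‖ - δ/2}` and `h b > ‖h‖ - δ/2`. Hence the first-coordinate projection, of norm one,
maps every convex combination of slices of `B_E` onto a superset of one of `B_X`, and projecting
only decreases distances to `(x, y)`. -/

section

variable {E F : Type*} [NormedAddCommGroup E] [NormedSpace ℝ E]
  [NormedAddCommGroup F] [NormedSpace ℝ F]

lemma sliceSet_inv_norm_smul {g : E →L[ℝ] ℝ} (hg : g ≠ 0) (δ : ℝ) :
    sliceSet (‖g‖⁻¹ • g) (δ / ‖g‖) = {u ∈ closedBall (0 : E) 1 | ‖g‖ - δ < g u} := by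
  have hg₀ : 0 < ‖g‖ := norm_pos_iff.2 hg
  ext u
  simp only [sliceSet, mem_ofPred_eq, FunLike.coe_smul, Pi.smul_apply, smul_eq_mul]
  refine and_congr_right fun _ => ?_
  rw [inv_mul_eq_div, lt_div_iff₀ hg₀, sub_mul, div_mul_cancel₀ _ hg₀.ne', one_mul]

lemma exists_isSlice_subset_setOf_sub_lt [Nontrivial E] (g : E →L[ℝ] ℝ) {δ : ℝ} (hδ : 0 < δ) :
    ∃ T, IsSlice T ∧ T ⊆ {u ∈ closedBall (0 : E) 1 | ‖g‖ - δ < g u} := by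
  by_cases hg : g = 0
  · obtain ⟨f, hf, -⟩ := exists_dual_vector' ℝ (0 : E)
    refine ⟨sliceSet f 1, ⟨f, 1, hf, one_pos, rfl⟩, fun u hu => ⟨hu.1, ?_⟩⟩
    simpa [hg] using hδ
  · refine ⟨_, ⟨‖g‖⁻¹ • g, δ / ‖g‖, ?_, div_pos hδ (norm_pos_iff.2 hg), rfl⟩,
      (sliceSet_inv_norm_smul hg δ).subset⟩
    rw [norm_smul, norm_inv, norm_norm, inv_mul_cancel₀ (norm_ne_zero_iff.2 hg)]

lemma ContinuousLinearMap.exists_mem_closedBall_sub_lt_apply (h : E →L[ℝ] ℝ) {ε : ℝ}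
    (hε : 0 < ε) : ∃ b ∈ closedBall (0 : E) 1, ‖h‖ - ε < h b := by
  obtain ⟨v, hv, hhv⟩ := h.exists_lt_apply_of_lt_opNorm (sub_lt_self ‖h‖ hε)
  rw [Real.norm_eq_abs, lt_abs] at hhv
  rcases hhv with hhv | hhv
  · exact ⟨v, mem_closedBall_zero_iff.2 hv.le, hhv⟩
  · exact ⟨-v, mem_closedBall_zero_iff.2 ((norm_neg v).trans_lt hv).le, by rwa [map_neg]⟩

lemma ContinuousLinearMap.norm_le_norm_comp_inl_add_norm_comp_inr (f : E × F →L[ℝ] ℝ) :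
    ‖f‖ ≤ ‖f.comp (inl ℝ E F)‖ + ‖f.comp (inr ℝ E F)‖ := by
  refine f.opNorm_le_bound (by positivity) fun z => ?_
  rw [← f.comp_inl_add_comp_inr z]
  calc ‖f.comp (inl ℝ E F) z.1 + f.comp (inr ℝ E F) z.2‖
      ≤ ‖f.comp (inl ℝ E F)‖ * ‖z.1‖ + ‖f.comp (inr ℝ E F)‖ * ‖z.2‖ :=
        (norm_add_le _ _).trans (add_le_add (le_opNorm _ _) (le_opNorm _ _))
    _ ≤ (‖f.comp (inl ℝ E F)‖ + ‖f.comp (inr ℝ E F)‖) * ‖z‖ := by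
        rw [add_mul]; gcongr
        exacts [_root_.norm_fst_le z, _root_.norm_snd_le z]

lemma IsSlice.image_linearIsometryEquiv {S : Set E} (hS : IsSlice S) (φ : E ≃ₗᵢ[ℝ] F) :
    IsSlice (φ '' S) := by
  obtain ⟨f, δ, hf, hδ, rfl⟩ := hS
  refine ⟨f.comp (φ.symm : F →L[ℝ] E), δ, by rw [f.opNorm_comp_linearIsometryEquiv, hf], hδ, ?_⟩
  ext w
  simp [sliceSet, φ.image_eq_preimage_symm]

lemma IsSlice.exists_isSlice_subset_image_fst [Nontrivial E] {S : Set (E × F)} (hS : IsSlice S) :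
    ∃ T : Set E, IsSlice T ∧ T ⊆ ContinuousLinearMap.fst ℝ E F '' S := by
  obtain ⟨f, δ, hf, hδ, rfl⟩ := hS
  set g := f.comp (.inl ℝ E F)
  set h := f.comp (.inr ℝ E F)
  obtain ⟨T, hT, hTg⟩ := exists_isSlice_subset_setOf_sub_lt g (half_pos hδ)
  obtain ⟨b, hb, hhb⟩ := h.exists_mem_closedBall_sub_lt_apply (half_pos hδ)
  refine ⟨T, hT, fun u hu => ⟨(u, b), ⟨?_, ?_⟩, rfl⟩⟩
  · rw [mem_closedBall_zero_iff, norm_prod_le_iff]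
    exact ⟨mem_closedBall_zero_iff.1 (hTg hu).1, mem_closedBall_zero_iff.1 hb⟩
  · have hfgh := f.norm_le_norm_comp_inl_add_norm_comp_inr
    have hgu := (hTg hu).2
    rw [← f.comp_inl_add_comp_inr (u, b)]
    linarith

lemma IsCCS.exists_isCCS_subset_image {C : Set E} (hC : IsCCS C) (L : E →L[ℝ] F)
    (hL : ∀ S, IsSlice S → ∃ T, IsSlice T ∧ T ⊆ L '' S) :
    ∃ D, IsCCS D ∧ D ⊆ L '' C := by
  obtain ⟨n, l, S, hl, hlsum, hS, rfl⟩ := hC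
  choose T hT hTS using fun i => hL (S i) (hS i)
  refine ⟨∑ i, l i • T i, ⟨n, l, T, hl, hlsum, hT, rfl⟩, ?_⟩
  rw [Set.image_finsetSum]
  refine finsetSum_subset_finsetSum _ _ _ fun i _ => ?_
  rw [image_smul_set]
  exact smul_set_mono (hTS i)

lemma CcsDaugavetPoint.of_map {e : E} (L : E →L[ℝ] F) (hL₁ : ‖L‖ ≤ 1)
    (hL : ∀ S, IsSlice S → ∃ T, IsSlice T ∧ T ⊆ L '' S) (he : CcsDaugavetPoint (L e)) :
    CcsDaugavetPoint e := by
  intro C hC ε hε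
  obtain ⟨D, hD, hDC⟩ := hC.exists_isCCS_subset_image L hL
  obtain ⟨u, hu, hεu⟩ := he D hD ε hε
  obtain ⟨z, hz, rfl⟩ := hDC hu
  refine ⟨z, hz, hεu.trans_le ?_⟩
  calc ‖L e - L z‖ = ‖L (e - z)‖ := by rw [map_sub]
    _ ≤ ‖L‖ * ‖e - z‖ := L.le_opNorm _
    _ ≤ ‖e - z‖ := mul_le_of_le_one_left (norm_nonneg _) hL₁

end

theorem ccsDaugavet_infty_sum_general {X Y : Type*} [NormedAddCommGroup X] [NormedSpace ℝ X]
    [NormedAddCommGroup Y] [NormedSpace ℝ Y]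
    (x : X) (hx : ‖x‖ = 1) (hxd : CcsDaugavetPoint x)
    (y : Y) :
    CcsDaugavetPoint ((WithLp.equiv ⊤ (X × Y)).symm (x, y)) := by
  have : Nontrivial X := nontrivial_of_ne x 0 (by rintro rfl; simp at hx)
  have hprod : CcsDaugavetPoint (x, y) :=
    hxd.of_map (e := (x, y)) _ (ContinuousLinearMap.norm_fst_le ℝ X Y) fun _ =>
      IsSlice.exists_isSlice_subset_image_fst
  let φ : WithLp ⊤ (X × Y) ≃ₗᵢ[ℝ] X × Y := WithLp.prodEquivₗᵢ
  exact hprod.of_map (φ : WithLp ⊤ (X × Y) →L[ℝ] X × Y)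
    φ.toLinearIsometry.norm_toContinuousLinearMap_le
    fun _ hS => ⟨_, hS.image_linearIsometryEquiv φ, subset_rfl⟩

theorem ccsDaugavet_infty_sum {X Y : Type*} [NormedAddCommGroup X] [NormedSpace ℝ X]
    [NormedAddCommGroup Y] [NormedSpace ℝ Y] [CompleteSpace X] [CompleteSpace Y]
    (x : X) (hx : ‖x‖ = 1) (hxd : CcsDaugavetPoint x)
    (y : Y) (hy : y ∈ closedBall (0 : Y) 1) :
    CcsDaugavetPoint ((WithLp.equiv ⊤ (X × Y)).symm (x, y)) :=
  ccsDaugavet_infty_sum_general x hx hxd y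
end

section
/- Let $X$ be a Banach space and $x \in S_X$. If $x$ is an extreme point of $B_X$ and a super $\Delta$-point, then $x$ is a ccs $\Delta$-point. -/
open Metric Set Pointwise Filter Topology

variable {X : Type*} [NormedAddCommGroup X] [NormedSpace ℝ X]

lemma extreme_fin_eq {n : ℕ} (x : X)
    (hext : x ∈ Set.extremePoints ℝ (closedBall (0 : X) 1))
    (l : Fin n → ℝ) (z : Fin n → X) (hl : ∀ i, 0 < l i) (hsum : ∑ i, l i = 1)
    (hz : ∀ i, z i ∈ closedBall (0 : X) 1) (hxz : ∑ i, l i • z i = x) :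
    ∀ j, z j = x := by
  obtain ⟨hxA, hA⟩ := mem_extremePoints.mp hext
  intro j
  set t := l j with ht
  set s := ∑ i ∈ (Finset.univ : Finset (Fin n)).erase j, l i with hs
  have hts : t + s = 1 := by
    rw [ht, hs, Finset.add_sum_erase _ _ (Finset.mem_univ j)]
    exact hsum
  have hzb : ∀ i, ‖z i‖ ≤ 1 := fun i => by
    simpa [mem_closedBall, dist_eq_norm] using hz i
  have hrest : ‖∑ i ∈ (Finset.univ : Finset (Fin n)).erase j, l i • z i‖ ≤ s := by
    calc ‖∑ i ∈ (Finset.univ : Finset (Fin n)).erase j, l i • z i‖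
        ≤ ∑ i ∈ (Finset.univ : Finset (Fin n)).erase j, ‖l i • z i‖ := norm_sum_le _ _
      _ ≤ ∑ i ∈ (Finset.univ : Finset (Fin n)).erase j, l i := by
          refine Finset.sum_le_sum fun i _ => ?_
          rw [norm_smul, Real.norm_of_nonneg (hl i).le]
          calc l i * ‖z i‖ ≤ l i * 1 :=
                mul_le_mul_of_nonneg_left (hzb i) (hl i).le
            _ = l i := mul_one _
  have hsnn : 0 ≤ s := Finset.sum_nonneg fun i _ => (hl i).le
  have hxsplit : x = t • z j + ∑ i ∈ (Finset.univ : Finset (Fin n)).erase j, l i • z i := by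
    rw [← hxz, ← Finset.add_sum_erase _ _ (Finset.mem_univ j)]
  rcases eq_or_lt_of_le hsnn with hs0 | hs0
  · have hrest0 : ∑ i ∈ (Finset.univ : Finset (Fin n)).erase j, l i • z i = 0 := by
      have := hrest
      rw [← hs0] at this
      exact norm_le_zero_iff.mp this
    have ht1 : t = 1 := by linarith
    rw [hxsplit, hrest0, add_zero, ht1, one_smul]
  · set w := s⁻¹ • ∑ i ∈ (Finset.univ : Finset (Fin n)).erase j, l i • z i with hw
    have hwB : w ∈ closedBall (0 : X) 1 := by
      rw [mem_closedBall, dist_zero_right, hw, norm_smul,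
        Real.norm_of_nonneg (inv_nonneg.mpr hsnn)]
      calc s⁻¹ * ‖∑ i ∈ (Finset.univ : Finset (Fin n)).erase j, l i • z i‖ ≤ s⁻¹ * s :=
            mul_le_mul_of_nonneg_left hrest (inv_nonneg.mpr hsnn)
        _ = 1 := inv_mul_cancel₀ hs0.ne'
    have hxo : x ∈ openSegment ℝ (z j) w := by
      refine ⟨t, s, hl j, hs0, hts, ?_⟩
      rw [hxsplit, hw, smul_smul, mul_inv_cancel₀ hs0.ne', one_smul]
    exact (hA (z j) (hz j) w hwB hxo).1

theorem ccsDelta_of_extreme_superDelta {X : Type*} [NormedAddCommGroup X]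
    [NormedSpace ℝ X] [CompleteSpace X] (x : X) (hx : ‖x‖ = 1)
    (hext : x ∈ Set.extremePoints ℝ (closedBall (0 : X) 1))
    (h : SuperDeltaPoint x) : CcsDeltaPoint x := by
  intro C hC hxC ε hε
  obtain ⟨n, l, S, hl, hsum, hS, rfl⟩ := hC
  rw [Set.mem_fintype_sum] at hxC
  obtain ⟨g, hg, hgs⟩ := hxC
  choose f δ hf hδ hSdef using hS
  -- recover the points z i ∈ S i with x = ∑ l i • z i
  have hz : ∀ i, ∃ z ∈ S i, l i • z = g i := fun i => Set.mem_smul_set.mp (hg i)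
  choose z hzS hgz using hz
  have hzball : ∀ i, z i ∈ closedBall (0 : X) 1 := fun i => by
    have := hzS i; rw [hSdef i] at this; exact this.1
  have hxz : ∑ i, l i • z i = x := by
    rw [← hgs]; exact Finset.sum_congr rfl fun i _ => hgz i
  have hzx : ∀ i, z i = x := extreme_fin_eq x hext l z hl hsum hzball hxz
  -- x belongs to every slice
  have hxS : ∀ i, x ∈ S i := fun i => hzx i ▸ hzS i
  -- build a relatively weakly open set
  set U : Set X := ⋂ i, (f i) ⁻¹' Set.Ioi (1 - δ i) with hU
  have hUopen : IsOpen (show Set (WeakSpace ℝ X) from U) := by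
    refine isOpen_iInter_of_finite fun i => ?_
    exact (isOpen_Ioi).preimage (WeakBilin.eval_continuous _ (f i))
  have hVS : ∀ y, y ∈ U ∩ closedBall (0 : X) 1 → ∀ i, y ∈ S i := by
    intro y hy i
    rw [hSdef i]
    exact ⟨hy.2, Set.mem_iInter.mp hy.1 i⟩
  have hxV : x ∈ U ∩ closedBall (0 : X) 1 := by
    refine ⟨Set.mem_iInter.mpr fun i => ?_, by
      simpa [mem_closedBall, dist_zero_right] using hx.le⟩
    have := hxS i; rw [hSdef i] at this; exact this.2
  obtain ⟨y, hyV, hy2⟩ := h (U ∩ closedBall (0 : X) 1) ⟨U, hUopen, rfl⟩ hxV ε hε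
  refine ⟨y, ?_, hy2⟩
  rw [Set.mem_fintype_sum]
  refine ⟨fun i => l i • y, fun i => smul_mem_smul_set (hVS y hyV i), ?_⟩
  rw [← Finset.sum_smul, hsum, one_smul]
end

section
/- Let $X$ be a Banach space and let $x \in S_X$. If $x$ is a Daugavet point (in the generalized sense for elements of $B_X$), then $rx$ is a Daugavet point for every $r \in [0,1]$; conversely, if $rx$ is a Daugavet point for some $r \in (0,1)$, then $x$ is a Daugavet point. -/
open Metric Set Pointwise Filter Topology

variable {X : Type*} [NormedAddCommGroup X] [NormedSpace ℝ X]

def DaugavetPointB {X : Type*} [NormedAddCommGroup X] [NormedSpace ℝ X] (z : X) : Prop :=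
  ∀ S : Set X, IsSlice S → ∀ ε > 0, ∃ y ∈ S, ‖z‖ + 1 - ε < ‖z - y‖

theorem daugavet_rays {X : Type*} [NormedAddCommGroup X] [NormedSpace ℝ X]
    [CompleteSpace X] (x : X) (hx : ‖x‖ = 1) :
    (DaugavetPointB x → ∀ r ∈ Set.Icc (0 : ℝ) 1, DaugavetPointB (r • x)) ∧
    (∀ r ∈ Set.Ioo (0 : ℝ) 1, DaugavetPointB (r • x) → DaugavetPointB x) := by
  constructor
  · intro hD r hr S hS ε hε
    obtain ⟨y, hyS, hy⟩ := hD S hS ε hε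
    refine ⟨y, hyS, ?_⟩
    have hnorm : ‖r • x‖ = r := by
      rw [norm_smul, hx, Real.norm_eq_abs, abs_of_nonneg hr.1, mul_one]
    have hkey : r • x - y = (x - y) - (1 - r) • x := by module
    have h2 : ‖x - y‖ - ‖(1 - r) • x‖ ≤ ‖r • x - y‖ := by
      rw [hkey]; exact norm_sub_norm_le _ _
    have h3 : ‖(1 - r) • x‖ = 1 - r := by
      rw [norm_smul, hx, Real.norm_eq_abs, abs_of_nonneg (by linarith [hr.2]), mul_one]
    rw [hnorm]
    rw [hx] at hy
    linarith
  · intro r hr hD S hS ε hε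
    have hr0 : 0 < r := hr.1
    obtain ⟨y, hyS, hy⟩ := hD S hS (ε * r) (mul_pos hε hr0)
    refine ⟨y, hyS, ?_⟩
    have hy1 : ‖y‖ ≤ 1 := by
      obtain ⟨f, δ, hf, hδ, rfl⟩ := hS
      exact mem_closedBall_zero_iff.mp hyS.1
    have hnorm : ‖r • x‖ = r := by
      rw [norm_smul, hx, Real.norm_eq_abs, abs_of_nonneg hr0.le, mul_one]
    rw [hnorm] at hy
    have hkey : x - y = (1/r) • (r • x - y) + (1/r - 1) • y := by
      have : (1/r) * r = 1 := by field_simp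
      match_scalars <;> field_simp <;> ring
    have h2 : ‖(1/r) • (r • x - y)‖ - ‖(1/r - 1) • y‖ ≤ ‖x - y‖ := by
      have ha : (1/r) • (r • x - y) = (x - y) - (1/r - 1) • y := by rw [hkey]; abel
      rw [sub_le_iff_le_add, ha]
      exact norm_sub_le _ _
    have h3 : ‖(1/r) • (r • x - y)‖ = (1/r) * ‖r • x - y‖ := by
      rw [norm_smul, Real.norm_eq_abs, abs_of_pos (by positivity)]
    have h4 : ‖(1/r - 1) • y‖ ≤ 1/r - 1 := by
      rw [norm_smul, Real.norm_eq_abs]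
      have h5 : (0:ℝ) ≤ 1/r - 1 := by
        rw [sub_nonneg, le_div_iff₀ hr0, one_mul]; exact hr.2.le
      rw [abs_of_nonneg h5]
      nlinarith
    have h6 : (1/r) * (r + 1 - ε * r) ≤ (1/r) * ‖r • x - y‖ := by
      apply mul_le_mul_of_nonneg_left hy.le (by positivity)
    have h7 : (1/r) * (r + 1 - ε * r) = 1 + 1/r - ε := by field_simp
    rw [hx]
    -- need 1 + 1 - ε < ‖x - y‖; but hy is strict, use strict version
    have h6' : (1/r) * (r + 1 - ε * r) < (1/r) * ‖r • x - y‖ :=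
      mul_lt_mul_of_pos_left hy (by positivity)
    linarith
end

section
/- Let $X$ be a Banach space and $x \in S_X$. If $rx$ is a ccs $\Delta$-point (in the generalized sense for elements of $B_X$) for a sequence of values $r \in (0,1)$ tending to $0$, then $x$ is a ccs Daugavet point. -/
open Metric Set Pointwise Filter Topology

variable {X : Type*} [NormedAddCommGroup X] [NormedSpace ℝ X]

def CcsDeltaPointB {X : Type*} [NormedAddCommGroup X] [NormedSpace ℝ X] (z : X) : Prop :=
  ∀ C : Set X, IsCCS C → z ∈ C → ∀ ε > 0, ∃ y ∈ C, ‖z‖ + 1 - ε < ‖z - y‖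

/-- Every slice contains a small ball around one of its points. -/
lemma isSlice_ball {S : Set X} (hS : IsSlice S) :
    ∃ (y : X) (t : ℝ), 0 < t ∧ ∀ u : X, ‖u‖ < t → y + u ∈ S := by
  obtain ⟨f, δ, hf, hδ, rfl⟩ := hS
  have h1 : max (1 - δ) 0 < ‖f‖ := by rw [hf]; exact max_lt (by linarith) one_pos
  obtain ⟨x₀, hx₀, hfx₀⟩ := f.exists_lt_apply_of_lt_opNorm h1
  have hfx₀' : max (1 - δ) 0 < |f x₀| := hfx₀
  set y : X := if 0 ≤ f x₀ then x₀ else -x₀ with hy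
  have hfy : f y = |f x₀| := by
    by_cases h0 : 0 ≤ f x₀
    · simp [hy, h0, abs_of_nonneg h0]
    · push_neg at h0
      simp [hy, not_le.mpr h0, abs_of_neg h0]
  have hyn : ‖y‖ < 1 := by
    by_cases h0 : 0 ≤ f x₀ <;> simp [hy, h0, hx₀]
  have hfy1 : 1 - δ < f y := by
    rw [hfy]; exact lt_of_le_of_lt (le_max_left _ _) hfx₀'
  refine ⟨y, min (1 - ‖y‖) (f y - (1 - δ)), lt_min (by linarith) (by linarith), ?_⟩
  intro u hu
  have hu1 : ‖u‖ < 1 - ‖y‖ := lt_of_lt_of_le hu (min_le_left _ _)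
  have hu2 : ‖u‖ < f y - (1 - δ) := lt_of_lt_of_le hu (min_le_right _ _)
  have hfu : |f u| ≤ ‖u‖ := by
    calc |f u| = ‖f u‖ := rfl
      _ ≤ ‖f‖ * ‖u‖ := f.le_opNorm u
      _ = ‖u‖ := by rw [hf, one_mul]
  constructor
  · rw [mem_closedBall_zero_iff]
    calc ‖y + u‖ ≤ ‖y‖ + ‖u‖ := norm_add_le _ _
      _ ≤ 1 := by linarith
  · have : f (y + u) = f y + f u := map_add f y u
    rw [this]
    have : -|f u| ≤ f u := neg_abs_le _
    linarith

/-- Members of slices lie in the unit ball. -/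
lemma isSlice_norm_le {S : Set X} (hS : IsSlice S) {z : X} (hz : z ∈ S) : ‖z‖ ≤ 1 := by
  obtain ⟨f, δ, hf, hδ, rfl⟩ := hS
  exact mem_closedBall_zero_iff.mp hz.1

/-- The negative of a slice is a slice. -/
lemma isSlice_neg {S : Set X} (hS : IsSlice S) : IsSlice (-S) := by
  obtain ⟨f, δ, hf, hδ, rfl⟩ := hS
  refine ⟨-f, δ, by rw [norm_neg, hf], hδ, ?_⟩
  ext z
  simp only [Set.mem_neg, sliceSet, Set.mem_sep_iff, mem_closedBall_zero_iff, norm_neg,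
    ContinuousLinearMap.neg_apply, map_neg, Set.mem_setOf_eq, neg_neg]

theorem ccsDaugavet_of_ccsDelta_on_ray {X : Type*} [NormedAddCommGroup X]
    [NormedSpace ℝ X] [CompleteSpace X] (x : X) (hx : ‖x‖ = 1)
    (r : ℕ → ℝ) (hr : ∀ n, r n ∈ Set.Ioo (0 : ℝ) 1)
    (hlim : Filter.Tendsto r Filter.atTop (nhds 0))
    (h : ∀ n, CcsDeltaPointB (r n • x)) :
    CcsDaugavetPoint x := by
  intro C hC ε hε
  obtain ⟨n, l, S, hlpos, hlsum, hSslice, rfl⟩ := hC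
  -- n is positive
  haveI hn : Nonempty (Fin n) := by
    rcases Nat.eq_zero_or_pos n with h0 | h0
    · exfalso; subst h0; simp at hlsum
    · exact ⟨⟨0, h0⟩⟩
  -- pick interior points of slices
  choose yy tt htpos hball using fun i => isSlice_ball (hSslice i)
  set t : ℝ := Finset.univ.inf' Finset.univ_nonempty tt with ht_def
  have ht : 0 < t := by
    rw [ht_def, Finset.lt_inf'_iff]
    exact fun i _ => htpos i
  have htle : ∀ i, t ≤ tt i := fun i => Finset.inf'_le _ (Finset.mem_univ i)
  have hyS : ∀ i, yy i ∈ S i := fun i => by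
    simpa using hball i 0 (by simpa using htpos i)
  have hynorm : ∀ i, ‖yy i‖ ≤ 1 := fun i => isSlice_norm_le (hSslice i) (hyS i)
  set y₀ : X := ∑ i, l i • yy i with hy₀_def
  have hy₀ : ‖y₀‖ ≤ 1 := by
    calc ‖∑ i, l i • yy i‖ ≤ ∑ i, ‖l i • yy i‖ := norm_sum_le _ _
      _ ≤ ∑ i, l i := by
          refine Finset.sum_le_sum fun i _ => ?_
          rw [norm_smul, Real.norm_eq_abs, abs_of_pos (hlpos i)]
          calc l i * ‖yy i‖ ≤ l i * 1 := by
                exact mul_le_mul_of_nonneg_left (hynorm i) (hlpos i).le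
            _ = l i := mul_one _
      _ = 1 := hlsum
  -- choose N with r N small
  obtain ⟨N, hN⟩ := (hlim.eventually_lt_const (half_pos ht)).exists
  set R : ℝ := r N with hR_def
  have hR0 : 0 < R := (hr N).1
  have hR1 : R < 1 := (hr N).2
  have hRt : R < t / 2 := hN
  -- the auxiliary ccs
  set L : Fin (n + n) → ℝ :=
    Fin.append (fun i => (1 + R) / 2 * l i) (fun i => (1 - R) / 2 * l i) with hL_def
  set T : Fin (n + n) → Set X := Fin.append S (fun i => -S i) with hT_def
  have hLpos : ∀ i, 0 < L i := by
    refine Fin.addCases ?_ ?_ <;> intro j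
    · rw [hL_def, Fin.append_left]
      have := hlpos j; nlinarith
    · rw [hL_def, Fin.append_right]
      have := hlpos j; nlinarith
  have hLsum : (∑ i, L i) = 1 := by
    rw [Fin.sum_univ_add]
    simp only [hL_def, Fin.append_left, Fin.append_right]
    rw [← Finset.mul_sum, ← Finset.mul_sum, hlsum]
    ring
  have hTslice : ∀ i, IsSlice (T i) := by
    refine Fin.addCases ?_ ?_ <;> intro j
    · rw [hT_def, Fin.append_left]; exact hSslice j
    · rw [hT_def, Fin.append_right]; exact isSlice_neg (hSslice j)
  have hEccs : IsCCS (∑ i, L i • T i) := ⟨n + n, L, T, hLpos, hLsum, hTslice, rfl⟩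
  -- R • x belongs to the auxiliary ccs
  set u : X := R • (x - y₀) with hu_def
  have hu : ‖u‖ < t := by
    have : ‖u‖ ≤ R * 2 := by
      rw [hu_def, norm_smul, Real.norm_eq_abs, abs_of_pos hR0]
      refine mul_le_mul_of_nonneg_left ?_ hR0.le
      calc ‖x - y₀‖ ≤ ‖x‖ + ‖y₀‖ := norm_sub_le _ _
        _ ≤ 2 := by rw [hx]; linarith
    linarith
  have hmem : R • x ∈ ∑ i, L i • T i := by
    rw [Set.mem_fintype_sum]
    refine ⟨Fin.append (fun i => ((1 + R) / 2 * l i) • (yy i + u))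
      (fun i => ((1 - R) / 2 * l i) • (-(yy i - u))), ?_, ?_⟩
    · refine Fin.addCases ?_ ?_ <;> intro j
      · rw [Fin.append_left, hL_def, hT_def]
        simp only [Fin.append_left]
        exact Set.smul_mem_smul_set (hball j u (lt_of_lt_of_le hu (htle j)))
      · rw [Fin.append_right, hL_def, hT_def]
        simp only [Fin.append_right]
        refine Set.smul_mem_smul_set ?_
        rw [Set.mem_neg, neg_neg]
        have : yy j - u = yy j + (-u) := by abel
        rw [this]
        exact hball j (-u) (by rw [norm_neg]; exact lt_of_lt_of_le hu (htle j))
    · rw [Fin.sum_univ_add]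
      simp only [Fin.append_left, Fin.append_right]
      have A : ∀ (a : ℝ) (v : X), (∑ i, (a * l i) • (yy i + v)) = a • (y₀ + v) := by
        intro a v
        simp_rw [mul_smul, ← Finset.smul_sum]
        congr 1
        simp_rw [smul_add]
        rw [Finset.sum_add_distrib, ← Finset.sum_smul, hlsum, one_smul, hy₀_def]
      have B : (∑ i, ((1 - R) / 2 * l i) • (-(yy i - u))) = ((1 - R) / 2) • (-(y₀ - u)) := by
        simp_rw [mul_smul, ← Finset.smul_sum]
        congr 1
        simp_rw [neg_sub, smul_sub]
        rw [Finset.sum_sub_distrib, ← Finset.sum_smul, hlsum, one_smul, hy₀_def]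
      rw [A, B, hu_def]
      module
  -- apply the Δ-point hypothesis
  obtain ⟨z, hzE, hz⟩ := h N _ hEccs hmem (R * ε) (mul_pos hR0 hε)
  have hRx : ‖R • x‖ = R := by
    rw [norm_smul, hx, mul_one, Real.norm_eq_abs, abs_of_pos hR0]
  rw [hRx] at hz
  -- decompose z
  rw [Set.mem_fintype_sum] at hzE
  obtain ⟨g, hg, hgsum⟩ := hzE
  have hg1 : ∀ i : Fin n, g (Fin.castAdd n i) ∈ ((1 + R) / 2 * l i) • S i := by
    intro i
    have := hg (Fin.castAdd n i)
    rwa [hL_def, hT_def, Fin.append_left, Fin.append_left] at this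
  choose c hcS hcg using fun i => Set.mem_smul_set.mp (hg1 i)
  set c' : X := ∑ i, l i • c i with hc'_def
  have hc'C : c' ∈ ∑ i, l i • S i :=
    Set.finset_sum_mem_finset_sum _ _ _ fun i _ => Set.smul_mem_smul_set (hcS i)
  refine ⟨c', hc'C, ?_⟩
  have hc'1 : ‖c'‖ ≤ 1 := by
    calc ‖∑ i, l i • c i‖ ≤ ∑ i, ‖l i • c i‖ := norm_sum_le _ _
      _ ≤ ∑ i, l i := by
          refine Finset.sum_le_sum fun i _ => ?_
          rw [norm_smul, Real.norm_eq_abs, abs_of_pos (hlpos i)]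
          calc l i * ‖c i‖ ≤ l i * 1 :=
                mul_le_mul_of_nonneg_left (isSlice_norm_le (hSslice i) (hcS i)) (hlpos i).le
            _ = l i := mul_one _
      _ = 1 := hlsum
  set rest : X := ∑ i : Fin n, g (Fin.natAdd n i) with hrest_def
  have hrest : ‖rest‖ ≤ (1 - R) / 2 := by
    have hbd : ∀ i : Fin n, ‖g (Fin.natAdd n i)‖ ≤ (1 - R) / 2 * l i := by
      intro i
      have hmem' := hg (Fin.natAdd n i)
      rw [hL_def, hT_def, Fin.append_right, Fin.append_right] at hmem'
      obtain ⟨w, hw, hwe⟩ := Set.mem_smul_set.mp hmem'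
      have hwn : ‖w‖ ≤ 1 := by
        have : -w ∈ S i := Set.mem_neg.mp hw
        have := isSlice_norm_le (hSslice i) this
        rwa [norm_neg] at this
      rw [← hwe, norm_smul, Real.norm_eq_abs]
      have hpos : (0 : ℝ) < (1 - R) / 2 * l i := by have := hlpos i; nlinarith
      rw [abs_of_pos hpos]
      calc (1 - R) / 2 * l i * ‖w‖ ≤ (1 - R) / 2 * l i * 1 :=
            mul_le_mul_of_nonneg_left hwn hpos.le
        _ = (1 - R) / 2 * l i := mul_one _
    calc ‖rest‖ ≤ ∑ i, ‖g (Fin.natAdd n i)‖ := norm_sum_le _ _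
      _ ≤ ∑ i, (1 - R) / 2 * l i := Finset.sum_le_sum fun i _ => hbd i
      _ = (1 - R) / 2 := by rw [← Finset.mul_sum, hlsum, mul_one]
  have hsplit : z = ((1 + R) / 2) • c' + rest := by
    rw [← hgsum, Fin.sum_univ_add, hrest_def]
    congr 1
    rw [hc'_def, Finset.smul_sum]
    refine Finset.sum_congr rfl fun i _ => ?_
    rw [smul_smul, hcg i]
  have hbound : ‖R • x - z‖ ≤ R * ‖x - c'‖ + (1 - R) := by
    have e : R • x - z = R • (x - c') - ((1 - R) / 2) • c' - rest := by
      rw [hsplit]; module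
    rw [e]
    calc ‖R • (x - c') - ((1 - R) / 2) • c' - rest‖
        ≤ ‖R • (x - c') - ((1 - R) / 2) • c'‖ + ‖rest‖ := norm_sub_le _ _
      _ ≤ ‖R • (x - c')‖ + ‖((1 - R) / 2) • c'‖ + ‖rest‖ := by
          have := norm_sub_le (R • (x - c')) (((1 - R) / 2) • c'); linarith
      _ ≤ R * ‖x - c'‖ + (1 - R) / 2 + (1 - R) / 2 := by
          have h1 : ‖R • (x - c')‖ = R * ‖x - c'‖ := by
            rw [norm_smul, Real.norm_eq_abs, abs_of_pos hR0]
          have h2 : ‖((1 - R) / 2) • c'‖ ≤ (1 - R) / 2 := by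
            rw [norm_smul, Real.norm_eq_abs, abs_of_pos (by linarith : (0:ℝ) < (1-R)/2)]
            calc (1 - R) / 2 * ‖c'‖ ≤ (1 - R) / 2 * 1 :=
                  mul_le_mul_of_nonneg_left hc'1 (by linarith)
              _ = (1 - R) / 2 := mul_one _
          linarith
      _ = R * ‖x - c'‖ + (1 - R) := by ring
  have key : R * (2 - ε) < R * ‖x - c'‖ := by nlinarith
  exact (mul_lt_mul_iff_right₀ hR0).mp key
end

section
/- Let $X$ be a Banach space and $x \in S_X$. If $x$ is a $\Delta$-point, then $rx$ is a $\Delta$-point (in the generalized sense for elements of $B_X$) for every $r \in (0,1)$. -/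
open Metric Set Pointwise Filter Topology

variable {X : Type*} [NormedAddCommGroup X] [NormedSpace ℝ X]

def DeltaPointB {X : Type*} [NormedAddCommGroup X] [NormedSpace ℝ X] (z : X) : Prop :=
  ∀ S : Set X, IsSlice S → z ∈ S → ∀ ε > 0, ∃ y ∈ S, ‖z‖ + 1 - ε < ‖z - y‖

theorem delta_rays {X : Type*} [NormedAddCommGroup X] [NormedSpace ℝ X]
    [CompleteSpace X] (x : X) (hx : ‖x‖ = 1)
    (hΔ : ∀ S : Set X, IsSlice S → x ∈ S → ∀ ε > 0, ∃ y ∈ S, 2 - ε < ‖x - y‖) :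
    ∀ r ∈ Set.Ioo (0 : ℝ) 1, DeltaPointB (r • x) := by
  rintro r ⟨hr0, hr1⟩ S hS hmem ε hε
  have hnorm : ‖r • x‖ = r := by
    rw [norm_smul, hx, Real.norm_eq_abs, abs_of_pos hr0, mul_one]
  obtain ⟨f, δ, hf, hδ, rfl⟩ := hS
  obtain ⟨hball, hfr⟩ := hmem
  have hfrx : f (r • x) = r * f x := by simp
  by_cases hxS : 1 - δ < f x
  · -- x is in the slice
    have hxmem : x ∈ sliceSet f δ := ⟨by simp [hx], hxS⟩
    obtain ⟨y, hyS, hy⟩ := hΔ _ ⟨f, δ, hf, hδ, rfl⟩ hxmem ε hε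
    refine ⟨y, hyS, ?_⟩
    have h1 : ‖x - y‖ - ‖x - r • x‖ ≤ ‖r • x - y‖ := by
      have := norm_sub_le_norm_sub_add_norm_sub x (r • x) y
      linarith
    have h2 : ‖x - r • x‖ = 1 - r := by
      rw [show x - r • x = (1 - r) • x by rw [sub_smul, one_smul]]
      rw [norm_smul, hx, Real.norm_eq_abs, abs_of_pos (by linarith), mul_one]
    rw [hnorm]
    linarith
  · -- f x ≤ 1 - δ, so f x < 0, and -x is in the slice
    push_neg at hxS
    have hfx : f x < 0 := by
      have : r * f x > 1 - δ := by rwa [hfrx] at hfr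
      nlinarith
    refine ⟨-x, ⟨by simp [hx], ?_⟩, ?_⟩
    · have : (1 : ℝ) - δ < 0 := lt_trans (by rwa [hfrx] at hfr) (by nlinarith)
      simp only [map_neg]
      linarith
    · rw [hnorm, sub_neg_eq_add, show r • x + x = (r + 1) • x by rw [add_smul, one_smul],
        norm_smul, hx, Real.norm_eq_abs, abs_of_pos (by linarith), mul_one]
      linarith
end

section
/- Let $X$ be a Banach space and $\beta \in (0,2]$. Then every nonempty relatively weakly open subset of $B_X$ has diameter at least $\beta$ if and only if every nonempty relatively weakly open subset of $B_X$ has Kuratowski measure of non-compactness at least $\beta$. -/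
open Metric Set Pointwise Filter Topology

variable {X : Type*} [NormedAddCommGroup X] [NormedSpace ℝ X]

noncomputable def kuratowski {X : Type*} [NormedAddCommGroup X] (A : Set X) : ℝ :=
  sInf {ε : ℝ | 0 ≤ ε ∧ ∃ (n : ℕ) (c : Fin n → Set X),
    A ⊆ ⋃ i, c i ∧ ∀ i, EMetric.diam (c i) ≤ ENNReal.ofReal ε}

/-!
A finite cover of a nonempty relatively weakly open `V ⊆ B_X` by sets of diameter
`≤ ε` yields a cover by their weak closures, which are weakly closed and, testing against norming
functionals, still have diameter `≤ ε`. Of finitely many closed sets covering a nonempty relatively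
open set, one contains a smaller nonempty relatively open set, so some nonempty relatively weakly
open `W` has diameter `≤ ε`. The converse is `α(V) ≤ diam V`.
-/

lemma exists_isOpen_inter_subset_of_subset_biUnion_isClosed {T ι : Type*} [TopologicalSpace T]
    {D : ι → Set T} (hD : ∀ i, IsClosed (D i)) {B : Set T} (s : Finset ι) {U : Set T}
    (hU : IsOpen U) (hne : (U ∩ B).Nonempty) (hsub : U ∩ B ⊆ ⋃ i ∈ s, D i) :
    ∃ i ∈ s, ∃ U' : Set T, IsOpen U' ∧ (U' ∩ B).Nonempty ∧ U' ∩ B ⊆ D i := by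
  classical
  induction s using Finset.induction generalizing U with
  | empty => simpa using hsub hne.some_mem
  | insert a s _ ih =>
    by_cases hout : (U ∩ (D a)ᶜ ∩ B).Nonempty
    · have hsub' : U ∩ (D a)ᶜ ∩ B ⊆ ⋃ i ∈ s, D i := by
        rintro x ⟨⟨hxU, hxa⟩, hxB⟩
        obtain ⟨i, hi, hxi⟩ := Set.mem_iUnion₂.mp (hsub ⟨hxU, hxB⟩)
        rcases Finset.mem_insert.mp hi with rfl | hi
        · exact absurd hxi hxa
        · exact Set.mem_biUnion hi hxi
      obtain ⟨i, hi, hres⟩ := ih (hU.inter (hD a).isOpen_compl) hout hsub'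
      exact ⟨i, Finset.mem_insert_of_mem hi, hres⟩
    · refine ⟨a, Finset.mem_insert_self a s, U, hU, hne, fun x hx => ?_⟩
      by_contra hxa
      exact hout ⟨x, ⟨hx.1, hxa⟩, hx.2⟩

section Kuratowski

variable {E : Type*} [NormedAddCommGroup E] {A : Set E}

lemma kuratowski_le_diam (hA : Bornology.IsBounded A) : kuratowski A ≤ Metric.diam A := by
  refine csInf_le ⟨0, fun ε hε => hε.1⟩ ⟨Metric.diam_nonneg, 1, fun _ => A,
    fun x hx => Set.mem_iUnion.mpr ⟨0, hx⟩, fun _ => ?_⟩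
  exact (ENNReal.ofReal_toReal hA.ediam_ne_top).ge

lemma le_kuratowski {β : ℝ} (hA : Bornology.IsBounded A)
    (h : ∀ ε, 0 ≤ ε → ∀ (n : ℕ) (c : Fin n → Set E), A ⊆ ⋃ i, c i →
      (∀ i, Metric.ediam (c i) ≤ ENNReal.ofReal ε) → β ≤ ε) :
    β ≤ kuratowski A := by
  refine le_csInf ⟨Metric.diam A, Metric.diam_nonneg, 1, fun _ => A,
    fun x hx => Set.mem_iUnion.mpr ⟨0, hx⟩, fun _ => ?_⟩ ?_
  · exact (ENNReal.ofReal_toReal hA.ediam_ne_top).ge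
  · rintro ε ⟨hε, n, c, hcov, hc⟩
    exact h ε hε n c hcov hc

end Kuratowski

lemma ediam_weakClosure_le (A : Set X) : Metric.ediam (weakClosure A) ≤ Metric.ediam A := by
  refine Metric.ediam_le fun x hx y hy => ?_
  obtain ⟨g, hg1, hgxy⟩ := exists_dual_vector'' ℝ (x - y)
  have hg : Continuous fun z : WeakSpace ℝ X => g z :=
    WeakBilin.eval_continuous (topDualPairing ℝ X).flip g
  have hmaps : Set.MapsTo (fun z : WeakSpace ℝ X => g z) A (g '' A) :=
    Set.mapsTo_image _ _
  have hgx : g x ∈ closure (g '' A) := map_mem_closure (X := WeakSpace ℝ X) hg hx hmaps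
  have hgy : g y ∈ closure (g '' A) := map_mem_closure (X := WeakSpace ℝ X) hg hy hmaps
  have hdist : dist x y ≤ dist (g x) (g y) := by
    rw [dist_eq_norm, Real.dist_eq, ← map_sub, hgxy]
    exact le_abs_self _
  calc edist x y ≤ edist (g x) (g y) := by
        simpa only [edist_dist] using ENNReal.ofReal_le_ofReal hdist
    _ ≤ Metric.ediam (closure (g '' A)) := Metric.edist_le_ediam_of_mem hgx hgy
    _ = Metric.ediam (g '' A) := Metric.ediam_closure _
    _ ≤ ‖g‖₊ * Metric.ediam A := g.lipschitz.ediam_image_le A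
    _ ≤ Metric.ediam A := by
      refine mul_le_of_le_one_left zero_le ?_
      exact_mod_cast hg1

lemma RelWeakOpen.subset_closedBall {V : Set X} (hV : RelWeakOpen V) : V ⊆ closedBall 0 1 := by
  obtain ⟨U, -, rfl⟩ := hV
  exact Set.inter_subset_right

lemma RelWeakOpen.isBounded {V : Set X} (hV : RelWeakOpen V) : Bornology.IsBounded V :=
  isBounded_closedBall.subset hV.subset_closedBall

lemma RelWeakOpen.exists_subset_weakClosure {V : Set X} (hV : RelWeakOpen V)
    (hne : V.Nonempty) {n : ℕ} {c : Fin n → Set X} (hcov : V ⊆ ⋃ i, c i) :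
    ∃ i, ∃ W : Set X, RelWeakOpen W ∧ W.Nonempty ∧ W ⊆ weakClosure (c i) := by
  obtain ⟨U, hU, rfl⟩ := hV
  have hcov' : U ∩ closedBall 0 1 ⊆ ⋃ i ∈ Finset.univ, weakClosure (c i) := by
    intro x hx
    obtain ⟨i, hi⟩ := Set.mem_iUnion.mp (hcov hx)
    exact Set.mem_biUnion (Finset.mem_univ i) (subset_closure (X := WeakSpace ℝ X) hi)
  obtain ⟨i, -, U', hU', hne', hsub⟩ :=
    exists_isOpen_inter_subset_of_subset_biUnion_isClosed (T := WeakSpace ℝ X)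
      (fun i => isClosed_closure) Finset.univ hU hne hcov'
  exact ⟨i, U' ∩ closedBall 0 1, ⟨U', hU', rfl⟩, hne', hsub⟩

theorem weakOpen_diam_iff_kuratowski_general {X : Type*} [NormedAddCommGroup X]
    [NormedSpace ℝ X] (β : ℝ) :
    (∀ V : Set X, RelWeakOpen V → V.Nonempty → β ≤ Metric.diam V) ↔
    (∀ V : Set X, RelWeakOpen V → V.Nonempty → β ≤ kuratowski V) := by
  constructor
  · intro hdiam V hV hne
    refine le_kuratowski hV.isBounded fun ε hε n c hcov hc => ?_
    obtain ⟨i, W, hW, hWne, hWc⟩ := hV.exists_subset_weakClosure hne hcov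
    have hWdiam : Metric.ediam W ≤ ENNReal.ofReal ε :=
      (Metric.ediam_mono hWc).trans ((ediam_weakClosure_le (c i)).trans (hc i))
    calc β ≤ Metric.diam W := hdiam W hW hWne
      _ ≤ ε := ENNReal.toReal_le_of_le_ofReal hε hWdiam
  · intro hk V hV hne
    exact (hk V hV hne).trans (kuratowski_le_diam hV.isBounded)

theorem weakOpen_diam_iff_kuratowski {X : Type*} [NormedAddCommGroup X]
    [NormedSpace ℝ X] [CompleteSpace X] (β : ℝ) (hβ : β ∈ Set.Ioc (0 : ℝ) 2) :
    (∀ V : Set X, RelWeakOpen V → V.Nonempty → β ≤ Metric.diam V) ↔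
    (∀ V : Set X, RelWeakOpen V → V.Nonempty → β ≤ kuratowski V) :=
  weakOpen_diam_iff_kuratowski_general β
end

section
/- Let $X$ be a Banach space. If $x \in S_X$ is a super $\Delta$-point, then $x$ is not a point of weak-to-norm continuity of $B_X$. Moreover, if $x$ is a super Daugavet point, then $\|x - y\| = 2$ for every point of weak-to-norm continuity $y$ of $B_X$. -/
open Metric Set Pointwise Filter Topology

variable {X : Type*} [NormedAddCommGroup X] [NormedSpace ℝ X]

def PointOfContinuity {X : Type*} [NormedAddCommGroup X] [NormedSpace ℝ X] (y : X) : Prop :=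
  y ∈ closedBall (0 : X) 1 ∧
    ∀ ε > 0, ∃ V : Set X, RelWeakOpen V ∧ y ∈ V ∧ Metric.diam V < ε

theorem superDelta_not_pointOfContinuity {X : Type*} [NormedAddCommGroup X]
    [NormedSpace ℝ X] [CompleteSpace X] (x : X) (hx : ‖x‖ = 1) :
    (SuperDeltaPoint x → ¬ PointOfContinuity x) ∧
    (SuperDaugavetPoint x → ∀ y : X, PointOfContinuity y → ‖x - y‖ = 2) := by

  have bounded : ∀ V : Set X, RelWeakOpen V → Bornology.IsBounded V := by
    rintro V ⟨U, hU, rfl⟩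
    exact (isBounded_closedBall).subset inter_subset_right
  constructor
  · rintro hsd ⟨hxball, hpoc⟩
    obtain ⟨V, hV, hxV, hdiam⟩ := hpoc 1 one_pos
    obtain ⟨y, hyV, hy⟩ := hsd V hV hxV 1 one_pos
    have : ‖x - y‖ ≤ Metric.diam V := by
      rw [← dist_eq_norm]
      exact dist_le_diam_of_mem (bounded V hV) hxV hyV
    linarith
  · intro hsdp y hy
    have hyball := hy.1
    have hle : ‖x - y‖ ≤ 2 := by
      have h1 : ‖y‖ ≤ 1 := by simpa using mem_closedBall_zero_iff.mp hyball
      calc ‖x - y‖ ≤ ‖x‖ + ‖y‖ := norm_sub_le x y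
        _ ≤ 2 := by rw [hx]; linarith
    have hge : ∀ ε > (0:ℝ), 2 - ε ≤ ‖x - y‖ := by
      intro ε hε
      obtain ⟨V, hV, hyV, hdiam⟩ := hy.2 (ε/2) (by linarith)
      obtain ⟨z, hzV, hz⟩ := hsdp V hV ⟨y, hyV⟩ (ε/2) (by linarith)
      have hdzy : ‖z - y‖ ≤ Metric.diam V := by
        rw [← dist_eq_norm]
        exact dist_le_diam_of_mem (bounded V hV) hzV hyV
      have : ‖x - z‖ ≤ ‖x - y‖ + ‖z - y‖ := by
        have := norm_sub_le (x - y) (z - y)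
        simpa [sub_sub_sub_cancel_right] using this
      linarith
    have : 2 ≤ ‖x - y‖ := by
      by_contra h
      push_neg at h
      have := hge ((2 - ‖x - y‖)/2) (by linarith)
      linarith
    linarith
end

section
/- Let $K$ be a compact Hausdorff topological space, $X$ a Banach space, and $t_0$ an accumulation point of $K$. If $f \in C(K,X)$ has $\|f\|_\infty = 1$ and $\|f(t_0)\| = 1$, then $f$ is a ccs Daugavet point: for every convex combination of slices $C$ of the unit ball of $C(K,X)$, $\sup_{g \in C} \|f - g\|_\infty = 2$. -/
open Metric Set Pointwise Filter Topology

variable {X : Type*} [NormedAddCommGroup X] [NormedSpace ℝ X]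

/-!
Pick `hᵢ` deep inside the slices `Sᵢ = S(φᵢ, δᵢ)`, and infinitely many points `tⱼ` near `t₀`
carrying bumps `ψⱼ` with pairwise disjoint supports. Signed sums of the `ψⱼ` have norm at most one,
so `∑ⱼ |φ(ψⱼ • w)| ≤ ‖φ‖ ‖w‖` and `φ(ψⱼ • w) → 0`. Hence for large `j` the functions
`hᵢ + ψⱼ • (-f(t₀) - hᵢ)`, which stay in the unit ball, remain in their slices; their convex
combination takes the value `-f(t₀)` at `tⱼ`, where `f` is close to `f(t₀)`, so it lies at distance
nearly `2` from `f`.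
-/

open Function

theorem exists_seq_isOpen_pairwise_disjoint_subset {K : Type*} [TopologicalSpace K] [T2Space K]
    {W : Set K} (hWo : IsOpen W) (hWi : W.Infinite) :
    ∃ (t : ℕ → K) (U : ℕ → Set K), (∀ n, IsOpen (U n)) ∧ (∀ n, t n ∈ U n) ∧
      (∀ n, U n ⊆ W) ∧ Pairwise (Disjoint on U) := by
  have : Infinite W := hWi.to_subtype
  obtain ⟨V, hVi, hVo, hVd⟩ := exists_seq_infinite_isOpen_pairwise_disjoint W
  choose t ht using fun n => (hVi n).nonempty
  exact ⟨fun n => t n, fun n => (↑) '' V n, fun n => hWo.isOpenMap_subtype_val _ (hVo n),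
    fun n => mem_image_of_mem _ (ht n), fun n => Subtype.coe_image_subset _ _,
    fun m n hmn => (disjoint_image_iff Subtype.val_injective).2 (hVd hmn)⟩

theorem exists_seq_bump_pairwise_disjoint_support {K : Type*} [TopologicalSpace K] [T2Space K]
    [NormalSpace K] {W : Set K} (hWo : IsOpen W) (hWi : W.Infinite) :
    ∃ (t : ℕ → K) (ψ : ℕ → C(K, ℝ)), (∀ n, t n ∈ W) ∧ (∀ n, ψ n (t n) = 1) ∧
      (∀ n x, ψ n x ∈ Icc (0 : ℝ) 1) ∧ Pairwise (Disjoint on fun n => support (ψ n)) := by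
  obtain ⟨t, U, hUo, htU, hUW, hUd⟩ := exists_seq_isOpen_pairwise_disjoint_subset hWo hWi
  have hbump : ∀ n, ∃ ψ : C(K, ℝ), support ψ ⊆ U n ∧ ψ (t n) = 1 ∧ ∀ x, ψ x ∈ Icc (0 : ℝ) 1 := by
    intro n
    obtain ⟨ψ, hψ0, hψ1, hψ01⟩ := exists_continuous_zero_one_of_isClosed (hUo n).isClosed_compl
      isClosed_singleton (disjoint_singleton_right.2 (not_not.2 (htU n)))
    exact ⟨ψ, fun x hx => by_contra fun hxU => hx (hψ0 hxU), hψ1 rfl, hψ01⟩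
  choose ψ hψU hψt hψ01 using hbump
  exact ⟨t, ψ, fun n => hUW n (htU n), hψt, hψ01, fun m n hmn => (hUd hmn).mono (hψU m) (hψU n)⟩

theorem abs_sum_mul_le_one_of_disjoint_support {ι K : Type*} {ψ : ι → K → ℝ}
    (hψ : ∀ j x, ψ j x ∈ Icc (0 : ℝ) 1) (hd : Pairwise (Disjoint on fun j => support (ψ j)))
    {c : ι → ℝ} (hc : ∀ j, |c j| ≤ 1) (s : Finset ι) (x : K) :
    |∑ j ∈ s, c j * ψ j x| ≤ 1 := by
  by_cases hx : ∃ j ∈ s, ψ j x ≠ 0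
  · obtain ⟨j, hj, hjx⟩ := hx
    rw [Finset.sum_eq_single_of_mem j hj fun k _ hkj => by
      rw [notMem_support.1 ((hd hkj).notMem_of_mem_right hjx), mul_zero]]
    rw [abs_mul, abs_of_nonneg (hψ j x).1]
    exact mul_le_one₀ (hc j) (hψ j x).1 (hψ j x).2
  · push Not at hx
    rw [Finset.sum_eq_zero fun j hj => by rw [hx j hj, mul_zero], abs_zero]
    exact zero_le_one

section CompactDomain

variable {K : Type*} [TopologicalSpace K] [CompactSpace K]

theorem norm_sum_smul_smul_le_of_disjoint_support {ι : Type*} {ψ : ι → C(K, ℝ)}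
    (hψ : ∀ j x, ψ j x ∈ Icc (0 : ℝ) 1) (hd : Pairwise (Disjoint on fun j => support (ψ j)))
    {c : ι → ℝ} (hc : ∀ j, |c j| ≤ 1) (s : Finset ι) (w : C(K, X)) :
    ‖∑ j ∈ s, c j • ψ j • w‖ ≤ ‖w‖ := by
  refine (ContinuousMap.norm_le _ (norm_nonneg w)).2 fun x => ?_
  have hx : (∑ j ∈ s, c j • ψ j • w) x = (∑ j ∈ s, c j * ψ j x) • w x := by
    simp [ContinuousMap.sum_apply, Finset.sum_smul, mul_smul]
  rw [hx, norm_smul, Real.norm_eq_abs]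
  exact (mul_le_of_le_one_left (norm_nonneg _)
    (abs_sum_mul_le_one_of_disjoint_support hψ hd hc s x)).trans (w.norm_coe_le_norm x)

theorem tendsto_apply_smul_of_disjoint_support {ι : Type*} {ψ : ι → C(K, ℝ)}
    (hψ : ∀ j x, ψ j x ∈ Icc (0 : ℝ) 1) (hd : Pairwise (Disjoint on fun j => support (ψ j)))
    (φ : C(K, X) →L[ℝ] ℝ) (w : C(K, X)) :
    Tendsto (fun j => φ (ψ j • w)) cofinite (𝓝 0) := by
  refine Summable.tendsto_cofinite_zero (Summable.of_abs ?_)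
  refine summable_of_sum_le (c := ‖φ‖ * ‖w‖) (fun j => abs_nonneg _) fun s => ?_
  set a := fun j => φ (ψ j • w)
  calc ∑ j ∈ s, |a j| = φ (∑ j ∈ s, (SignType.sign (a j) : ℝ) • ψ j • w) := by
        simp [a, map_sum, sign_mul_self]
    _ ≤ ‖φ‖ * ‖∑ j ∈ s, (SignType.sign (a j) : ℝ) • ψ j • w‖ :=
        (le_abs_self _).trans (φ.le_opNorm _)
    _ ≤ ‖φ‖ * ‖w‖ := by
        gcongr
        exact norm_sum_smul_smul_le_of_disjoint_support hψ hd fun j => by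
          cases SignType.sign (a j) <;> simp s w

theorem norm_add_smul_const_sub_le_one {h : C(K, X)} (hh : ‖h‖ ≤ 1) {v : X} (hv : ‖v‖ ≤ 1)
    {ψ : C(K, ℝ)} (hψ : ∀ x, ψ x ∈ Icc (0 : ℝ) 1) :
    ‖h + ψ • (ContinuousMap.const K v - h)‖ ≤ 1 := by
  refine (ContinuousMap.norm_le _ zero_le_one).2 fun x => ?_
  simpa using (convex_closedBall (0 : X) 1).add_smul_sub_mem
    (mem_closedBall_zero_iff.2 ((h.norm_coe_le_norm x).trans hh)) (mem_closedBall_zero_iff.2 hv)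
    (hψ x)

end CompactDomain

theorem ContinuousLinearMap.exists_norm_le_one_lt_apply {E : Type*} [NormedAddCommGroup E]
    [NormedSpace ℝ E] (φ : E →L[ℝ] ℝ) {r : ℝ} (hr : r < ‖φ‖) : ∃ x, ‖x‖ ≤ 1 ∧ r < φ x := by
  obtain ⟨x, hx1, hrx⟩ := φ.exists_lt_apply_of_lt_opNorm hr
  rcases le_or_gt 0 (φ x) with hx | hx
  · exact ⟨x, hx1.le, by rwa [Real.norm_of_nonneg hx] at hrx⟩
  · exact ⟨-x, by simpa using hx1.le, by rwa [map_neg, ← Real.norm_of_nonpos hx.le]⟩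

theorem ck_norm_attained_at_accumulation_ccsDaugavet_general
    {K : Type*} [TopologicalSpace K] [CompactSpace K] [T2Space K]
    {X : Type*} [NormedAddCommGroup X] [NormedSpace ℝ X]
    (t₀ : K) (hacc : t₀ ∈ closure ({t₀}ᶜ : Set K))
    (f : C(K, X)) (hft₀ : ‖f t₀‖ = 1) :
    CcsDaugavetPoint f := by
  rintro C ⟨n, l, S, -, hl_sum, hS, rfl⟩ ε hε
  choose φ δ hφ hδ hS using hS
  obtain rfl : S = fun i => sliceSet (φ i) (δ i) := funext hS
  choose h hh_norm hh_lt using fun i =>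
    (φ i).exists_norm_le_one_lt_apply (r := 1 - δ i / 2) (by linarith [hφ i, hδ i])
  have : (𝓝[≠] t₀).NeBot := mem_closure_iff_nhdsWithin_neBot.1 hacc
  set W := {x | ‖f x - f t₀‖ < ε}
  have hWo : IsOpen W := isOpen_lt (by fun_prop) continuous_const
  obtain ⟨t, ψ, htW, hψt, hψ01, hψd⟩ := exists_seq_bump_pairwise_disjoint_support hWo
    (infinite_of_mem_nhds t₀ (hWo.mem_nhds (by simpa [W] using hε)))
  set v := -f t₀
  set g := fun j i => h i + ψ j • (ContinuousMap.const K v - h i)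
  obtain ⟨j, hj⟩ : ∃ j, ∀ i, -(δ i / 2) < φ i (ψ j • (ContinuousMap.const K v - h i)) :=
    (eventually_all.2 fun i => (tendsto_apply_smul_of_disjoint_support hψ01 hψd (φ i)
      _).eventually_const_lt (neg_lt_zero.2 (half_pos (hδ i)))).exists
  have hg : ∀ i, g j i ∈ sliceSet (φ i) (δ i) := fun i =>
    ⟨mem_closedBall_zero_iff.2 (norm_add_smul_const_sub_le_one (hh_norm i) (by simp [v, hft₀])
      (hψ01 j)), by simp only [g, map_add]; linarith [hh_lt i, hj i]⟩
  refine ⟨∑ i, l i • g j i, (mem_fintype_sum _ _).2 ⟨_, fun i => smul_mem_smul_set (hg i), rfl⟩, ?_⟩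
  have hy : (∑ i, l i • g j i) (t j) = v := by
    simp [g, hψt, ContinuousMap.sum_apply, -smul_add, ← Finset.sum_smul, hl_sum]
  calc 2 - ε < ‖f t₀ + f t₀‖ - ‖f t₀ - f (t j)‖ := by
        rw [← two_smul ℝ, norm_smul, hft₀, norm_sub_rev]
        norm_num
        exact htW j
    _ ≤ ‖f (t j) - v‖ := by
        simpa [v, add_comm] using norm_sub_norm_le (f t₀ + f t₀) (f t₀ - f (t j))
    _ ≤ ‖f - ∑ i, l i • g j i‖ := by
        simpa [hy] using (f - ∑ i, l i • g j i).norm_coe_le_norm (t j)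

theorem ck_norm_attained_at_accumulation_ccsDaugavet
    {K : Type*} [TopologicalSpace K] [CompactSpace K] [T2Space K]
    {X : Type*} [NormedAddCommGroup X] [NormedSpace ℝ X] [CompleteSpace X]
    (t₀ : K) (hacc : t₀ ∈ closure ({t₀}ᶜ : Set K))
    (f : C(K, X)) (hf : ‖f‖ = 1) (hft₀ : ‖f t₀‖ = 1) :
    CcsDaugavetPoint f :=
  ck_norm_attained_at_accumulation_ccsDaugavet_general t₀ hacc f hft₀
end

section
/- Let $X$ be a Banach space and $C$ a closed, convex, bounded subset of $X$. Then the set of points of strong regularity of $C$ is convex. -/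
open Metric Set Pointwise Filter Topology

variable {X : Type*} [NormedAddCommGroup X] [NormedSpace ℝ X]

def sliceOf {X : Type*} [NormedAddCommGroup X] [NormedSpace ℝ X]
    (C : Set X) (f : X →L[ℝ] ℝ) (δ : ℝ) : Set X :=
  {y ∈ C | sSup ((fun z => f z) '' C) - δ < f y}

def IsSliceOf {X : Type*} [NormedAddCommGroup X] [NormedSpace ℝ X]
    (C S : Set X) : Prop :=
  ∃ (f : X →L[ℝ] ℝ) (δ : ℝ), 0 < δ ∧ S = sliceOf C f δ

def IsCCSOf {X : Type*} [NormedAddCommGroup X] [NormedSpace ℝ X]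
    (C D : Set X) : Prop :=
  ∃ (n : ℕ) (l : Fin n → ℝ) (S : Fin n → Set X),
    (∀ i, 0 < l i) ∧ (∑ i, l i) = 1 ∧ (∀ i, IsSliceOf C (S i)) ∧
    D = ∑ i, l i • S i

def StrongRegularityPoint {X : Type*} [NormedAddCommGroup X] [NormedSpace ℝ X]
    (C : Set X) (x : X) : Prop :=
  x ∈ C ∧ ∀ ε > 0, ∃ D : Set X, IsCCSOf C D ∧ x ∈ D ∧ Metric.diam D < ε

lemma aux_smul_finset_sum_set {X : Type*} [NormedAddCommGroup X] [NormedSpace ℝ X]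
    {ι : Type*} (a : ℝ) (t : Finset ι) (S : ι → Set X) :
    a • (∑ i ∈ t, S i) = ∑ i ∈ t, a • S i := by
  have h := Set.image_finset_sum (DistribMulAction.toAddMonoidHom X a) t S
  simpa only [DistribMulAction.toAddMonoidHom_apply, Set.image_smul] using h

lemma aux_sum_smul_convex {X : Type*} [NormedAddCommGroup X] [NormedSpace ℝ X]
    {ι : Type*} {C : Set X} (hconv : Convex ℝ C) (hne : C.Nonempty)
    (t : Finset ι) (l : ι → ℝ) (hl : ∀ i ∈ t, 0 ≤ l i) :
    (∑ i ∈ t, l i) • C = ∑ i ∈ t, l i • C := by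
  classical
  induction t using Finset.cons_induction with
  | empty => simpa using Set.zero_smul_set hne
  | cons i s his ih =>
      rw [Finset.sum_cons, Finset.sum_cons,
        hconv.add_smul (hl i (Finset.mem_cons_self i s))
          (Finset.sum_nonneg fun j hj => hl j (Finset.mem_cons_of_mem hj)),
        ih fun j hj => hl j (Finset.mem_cons_of_mem hj)]

lemma aux_ccs_subset {X : Type*} [NormedAddCommGroup X] [NormedSpace ℝ X]
    {C D : Set X} (hconv : Convex ℝ C) (hne : C.Nonempty) (h : IsCCSOf C D) :
    D ⊆ C := by
  obtain ⟨n, l, S, hl, hlsum, hS, rfl⟩ := h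
  have hsub : ∀ i, S i ⊆ C := by
    intro i
    obtain ⟨f, δ, hδ, hSi⟩ := hS i
    rw [hSi]
    exact Set.sep_subset _ _
  calc (∑ i, l i • S i) ⊆ ∑ i, l i • C :=
        Set.finset_sum_subset_finset_sum _ _ _
          (fun i _ => Set.smul_set_mono (hsub i))
    _ = (∑ i, l i) • C :=
        (aux_sum_smul_convex hconv hne _ l fun i _ => (hl i).le).symm
    _ = C := by rw [hlsum, one_smul]

lemma aux_ccs_combo {X : Type*} [NormedAddCommGroup X] [NormedSpace ℝ X]
    {C D₁ D₂ : Set X} {a b : ℝ} (ha : 0 < a) (hb : 0 < b) (hab : a + b = 1)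
    (h1 : IsCCSOf C D₁) (h2 : IsCCSOf C D₂) : IsCCSOf C (a • D₁ + b • D₂) := by
  obtain ⟨n, l, S, hl, hlsum, hS, rfl⟩ := h1
  obtain ⟨m, k, T, hk, hksum, hT, rfl⟩ := h2
  refine ⟨n + m, Fin.append (fun i => a * l i) (fun j => b * k j),
    Fin.append S T, ?_, ?_, ?_, ?_⟩
  · intro i
    cases i using Fin.addCases with
    | left i => simpa [Fin.append_left] using mul_pos ha (hl i)
    | right j => simpa [Fin.append_right] using mul_pos hb (hk j)
  · rw [Fin.sum_univ_add]
    simp only [Fin.append_left, Fin.append_right, ← Finset.mul_sum, hlsum, hksum,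
      mul_one, hab]
  · intro i
    cases i using Fin.addCases with
    | left i => simpa [Fin.append_left] using hS i
    | right j => simpa [Fin.append_right] using hT j
  · rw [Fin.sum_univ_add, aux_smul_finset_sum_set, aux_smul_finset_sum_set]
    simp only [Fin.append_left, Fin.append_right, smul_smul]

theorem strongRegularityPoints_convex {X : Type*} [NormedAddCommGroup X]
    [NormedSpace ℝ X] [CompleteSpace X] (C : Set X) (hC : IsClosed C)
    (hconv : Convex ℝ C) (hbdd : Bornology.IsBounded C) :
    Convex ℝ {x : X | StrongRegularityPoint C x} := by
  intro x hx y hy a b ha hb hab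
  simp only [Set.mem_setOf_eq] at hx hy ⊢
  rcases eq_or_lt_of_le ha with rfl | ha'
  · have hb1 : b = 1 := by linarith
    simpa [hb1] using hy
  rcases eq_or_lt_of_le hb with rfl | hb'
  · have ha1 : a = 1 := by linarith
    simpa [ha1] using hx
  have hCne : C.Nonempty := ⟨x, hx.1⟩
  refine ⟨hconv hx.1 hy.1 ha hb hab, ?_⟩
  intro ε hε
  obtain ⟨D₁, hccs₁, hxD₁, hd₁⟩ := hx.2 (ε / 3) (by linarith)
  obtain ⟨D₂, hccs₂, hyD₂, hd₂⟩ := hy.2 (ε / 3) (by linarith)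
  have hD₁C : D₁ ⊆ C := aux_ccs_subset hconv hCne hccs₁
  have hD₂C : D₂ ⊆ C := aux_ccs_subset hconv hCne hccs₂
  have hbd₁ : Bornology.IsBounded D₁ := hbdd.subset hD₁C
  have hbd₂ : Bornology.IsBounded D₂ := hbdd.subset hD₂C
  refine ⟨a • D₁ + b • D₂, aux_ccs_combo ha' hb' hab hccs₁ hccs₂,
    Set.add_mem_add (Set.smul_mem_smul_set hxD₁) (Set.smul_mem_smul_set hyD₂), ?_⟩
  have hdiam : Metric.diam (a • D₁ + b • D₂) ≤ ε / 3 := by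
    apply Metric.diam_le_of_forall_dist_le (by linarith)
    rintro z hz w hw
    rw [Set.mem_add] at hz hw
    obtain ⟨u, hu, v, hv, rfl⟩ := hz
    obtain ⟨u', hu', v', hv', rfl⟩ := hw
    obtain ⟨z₁, hz₁, rfl⟩ := hu
    obtain ⟨z₂, hz₂, rfl⟩ := hv
    obtain ⟨w₁, hw₁, rfl⟩ := hu'
    obtain ⟨w₂, hw₂, rfl⟩ := hv'
    have key : a • z₁ + b • z₂ - (a • w₁ + b • w₂) = a • (z₁ - w₁) + b • (z₂ - w₂) := by
      simp [smul_sub]; abel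
    have h1 : ‖z₁ - w₁‖ ≤ ε / 3 := by
      rw [← dist_eq_norm]
      exact (Metric.dist_le_diam_of_mem hbd₁ hz₁ hw₁).trans hd₁.le
    have h2 : ‖z₂ - w₂‖ ≤ ε / 3 := by
      rw [← dist_eq_norm]
      exact (Metric.dist_le_diam_of_mem hbd₂ hz₂ hw₂).trans hd₂.le
    calc dist (a • z₁ + b • z₂) (a • w₁ + b • w₂)
        = ‖a • (z₁ - w₁) + b • (z₂ - w₂)‖ := by rw [dist_eq_norm, key]
      _ ≤ ‖a • (z₁ - w₁)‖ + ‖b • (z₂ - w₂)‖ := norm_add_le _ _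
      _ = a * ‖z₁ - w₁‖ + b * ‖z₂ - w₂‖ := by
          rw [norm_smul, norm_smul, Real.norm_eq_abs, Real.norm_eq_abs,
            abs_of_pos ha', abs_of_pos hb']
      _ ≤ a * (ε / 3) + b * (ε / 3) := by
          gcongr
      _ = ε / 3 := by rw [← add_mul, hab, one_mul]
  linarith
end
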